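/- Completeness of the combined transformations with respect to E-interpretations: for every clause set M and every transformation tr in {rr, sh∘rr, crr, sh∘crr} ∪ {π∘τ : π ∈ {rr, sh∘rr, crr, sh∘crr}, τ ∈ {blsd, blsp, blud, blup}} (composition read left-to-right, e.g. (sh∘rr∘blud)(M) = blud(rr(sh(M)))), if tr(M) ∪ {x ≈ x ← dom(x)} is E-satisfiable then M is E-satisfiable. Moreover the converse (soundness) holds: if M is E-satisfiable then tr(M) ∪ {x ≈ x ← dom(x)} is E-satisfiable. -/

import Mathlib

namespace BUMG

/-- First-order terms over function symbols `F`, with variables indexed by `ℕ`. -/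
inductive Term (F : Type) : Type where
  | var : ℕ → Term F
  | app : F → List (Term F) → Term F

namespace Term
variable {F : Type}

/-- The list of variables occurring in a term. -/
def vars : Term F → List ℕ
  | var n => [n]
  | app _ ts => ts.attach.flatMap (fun t => vars t.1)
decreasing_by simp_wf; have := List.sizeOf_lt_of_mem t.2; omega

/-- The function symbols (with the arity of the occurrence) occurring in a term. -/
def funcs : Term F → List (F × ℕ)
  | var _ => []
  | app f ts => (f, ts.length) :: ts.attach.flatMap (fun t => funcs t.1)
decreasing_by simp_wf; have := List.sizeOf_lt_of_mem t.2; omega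

/-- Applying a substitution to a term. -/
def subst (g : ℕ → Term F) : Term F → Term F
  | var n => g n
  | app f ts => app f (ts.attach.map (fun t => subst g t.1))
decreasing_by simp_wf; have := List.sizeOf_lt_of_mem t.2; omega

/-- The number of occurrences of symbols (variables and function symbols) in a term. -/
def size : Term F → ℕ
  | var _ => 1
  | app _ ts => 1 + (ts.attach.map (fun t => size t.1)).sum
decreasing_by simp_wf; have := List.sizeOf_lt_of_mem t.2; omega

/-- A term is ground iff it contains no variables. -/
def IsGround (t : Term F) : Prop := t.vars = []

def isVar : Term F → Bool
  | var _ => true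
  | app _ _ => false

/-- A proper functional term is a term that is neither a variable nor a constant. -/
def isPF : Term F → Bool
  | app _ (_ :: _) => true
  | _ => false

/-- The subterm relation. -/
inductive Subterm : Term F → Term F → Prop
  | refl (t : Term F) : Subterm t t
  | app {s t : Term F} {f : F} {ts : List (Term F)} :
      t ∈ ts → Subterm s t → Subterm s (app f ts)

end Term

/-- Atoms over predicate symbols `P` and function symbols `F`. -/
structure Atom (P F : Type) where
  pred : P
  args : List (Term F)

namespace Atom
variable {P F : Type}

def subst (g : ℕ → Term F) (a : Atom P F) : Atom P F := ⟨a.pred, a.args.map (Term.subst g)⟩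
def vars (a : Atom P F) : List ℕ := a.args.flatMap Term.vars
def IsGround (a : Atom P F) : Prop := a.vars = []
def funcs (a : Atom P F) : List (F × ℕ) := a.args.flatMap Term.funcs
/-- Whether the atom contains a proper functional term. -/
def hasPF (a : Atom P F) : Bool := a.args.any Term.isPF
def size (a : Atom P F) : ℕ := 1 + (a.args.map Term.size).sum

end Atom

/-- A clause `H₁ ∨ ... ∨ Hₘ ← B₁ ∧ ... ∧ Bₖ` with head atoms `heads`
and body atoms `body`. -/
structure Clause (P F : Type) where
  heads : List (Atom P F)
  body : List (Atom P F)

namespace Clause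
variable {P F : Type}

def atoms (C : Clause P F) : List (Atom P F) := C.heads ++ C.body
def vars (C : Clause P F) : List ℕ := C.atoms.flatMap Atom.vars
def bodyVars (C : Clause P F) : List ℕ := C.body.flatMap Atom.vars
def headVars (C : Clause P F) : List ℕ := C.heads.flatMap Atom.vars
def maxVar (C : Clause P F) : ℕ := C.vars.foldr max 0
def subst (g : ℕ → Term F) (C : Clause P F) : Clause P F :=
  ⟨C.heads.map (Atom.subst g), C.body.map (Atom.subst g)⟩
/-- The predicate symbols (with the arity of the occurrence) occurring in a clause. -/
def preds (C : Clause P F) : List (P × ℕ) := C.atoms.map (fun a => (a.pred, a.args.length))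
/-- The function symbols (with the arity of the occurrence) occurring in a clause. -/
def funcs (C : Clause P F) : List (F × ℕ) := C.atoms.flatMap Atom.funcs
/-- The number of occurrences of symbols in a clause. -/
def size (C : Clause P F) : ℕ := (C.atoms.map Atom.size).sum

/-- A clause is range-restricted iff every variable occurring in it occurs in its body. -/
def RangeRestricted (C : Clause P F) : Prop := ∀ v ∈ C.vars, v ∈ C.bodyVars

/-- A Bernays–Schönfinkel clause: every functional term occurring in it is a constant. -/
def BS (C : Clause P F) : Prop := ∀ fn ∈ C.funcs, fn.2 = 0

end Clause

/-- A clause set is range-restricted iff all its clauses are. -/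
def RangeRestrictedSet {P F : Type} (M : Set (Clause P F)) : Prop :=
  ∀ C ∈ M, C.RangeRestricted

/-- The predicate symbols (with arities) occurring in a clause set. -/
def predsOf {P F : Type} (M : Set (Clause P F)) : Set (P × ℕ) :=
  { pn | ∃ C ∈ M, pn ∈ C.preds }

/-- The function symbols (with arities) occurring in a clause set. -/
def funcsOf {P F : Type} (M : Set (Clause P F)) : Set (F × ℕ) :=
  { fn | ∃ C ∈ M, fn ∈ C.funcs }

/-- A signature: a set of predicate symbols with arities and
a set of function symbols with arities. -/
structure Sig (P F : Type) where
  preds : Set (P × ℕ)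
  funcs : Set (F × ℕ)

/-- The clause set `M` is well-formed over the signature `σ`: all symbols occurring in `M`
belong to `σ` (with matching arities). -/
def WFSet {P F : Type} (σ : Sig P F) (M : Set (Clause P F)) : Prop :=
  ∀ C ∈ M, (∀ pn ∈ C.preds, pn ∈ σ.preds) ∧ (∀ fn ∈ C.funcs, fn ∈ σ.funcs)

/-- The total number of occurrences of symbols in a clause set. -/
noncomputable def setSize {P F : Type} (M : Set (Clause P F)) : ℕ :=
  ∑ᶠ C ∈ M, C.size

/-! ### Herbrand semantics -/

/-- A substitution is ground iff it maps every variable to a ground term. -/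
def GroundSubst {F : Type} (g : ℕ → Term F) : Prop := ∀ n, (g n).IsGround

/-- A (Herbrand) interpretation `I` (a set of ground atoms) satisfies a clause iff
it satisfies every ground instance of it. -/
def satClause {P F : Type} (I : Set (Atom P F)) (C : Clause P F) : Prop :=
  ∀ g : ℕ → Term F, GroundSubst g →
    (∀ a ∈ C.body, a.subst g ∈ I) → ∃ a ∈ C.heads, a.subst g ∈ I

/-- A clause set is satisfiable iff some Herbrand interpretation (a set of ground atoms)
satisfies every ground instance of every clause of it. -/
def Satisfiable {P F : Type} (M : Set (Clause P F)) : Prop :=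
  ∃ I : Set (Atom P F), (∀ a ∈ I, a.IsGround) ∧ ∀ C ∈ M, satClause I C

/-! ### Equality axioms and E-satisfiability -/

/-- The equality atom `s ≈ t` (`eqP` being the distinguished equality predicate `≈`). -/
def eqAtom {P F : Type} (eqP : P) (s t : Term F) : Atom P F := ⟨eqP, [s, t]⟩

def rangeVars {F : Type} (n : ℕ) : List (Term F) := (List.range n).map Term.var

def xsList {F : Type} (n : ℕ) : List (Term F) := (List.range n).map (fun i => Term.var (2*i))
def ysList {F : Type} (n : ℕ) : List (Term F) := (List.range n).map (fun i => Term.var (2*i+1))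
def eqConjList {P F : Type} (eqP : P) (n : ℕ) : List (Atom P F) :=
  (List.range n).map (fun i => eqAtom eqP (Term.var (2*i)) (Term.var (2*i+1)))

/-- The equality axioms `EAX`: `≈` is reflexive, symmetric, transitive and compatible with
the given function and predicate symbols. -/
def EAX {P F : Type} (eqP : P) (Ps : Set (P × ℕ)) (Fs : Set (F × ℕ)) : Set (Clause P F) :=
  { ⟨[eqAtom eqP (Term.var 0) (Term.var 0)], []⟩,
    ⟨[eqAtom eqP (Term.var 1) (Term.var 0)], [eqAtom eqP (Term.var 0) (Term.var 1)]⟩,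
    ⟨[eqAtom eqP (Term.var 0) (Term.var 2)],
      [eqAtom eqP (Term.var 0) (Term.var 1), eqAtom eqP (Term.var 1) (Term.var 2)]⟩ } ∪
  { D | ∃ fn ∈ Fs,
      D = ⟨[eqAtom eqP (Term.app fn.1 (xsList fn.2)) (Term.app fn.1 (ysList fn.2))],
           eqConjList eqP fn.2⟩ } ∪
  { D | ∃ pn ∈ Ps,
      D = ⟨[⟨pn.1, ysList pn.2⟩], ⟨pn.1, xsList pn.2⟩ :: eqConjList eqP pn.2⟩ }

/-- A clause set `M` is E-satisfiable iff `M` together with the equality axioms for the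
symbols occurring in `M` is satisfiable. -/
def ESatisfiable {P F : Type} (eqP : P) (M : Set (Clause P F)) : Prop :=
  Satisfiable (M ∪ EAX eqP (predsOf M) (funcsOf M))

/-! ### Range-restricting transformations -/

/-- The atom `dom(t)`. -/
def domAtom {P F : Type} (domP : P) (t : Term F) : Atom P F := ⟨domP, [t]⟩

/-- The term `c` for a constant `c`. -/
def cTerm {F : Type} (c : F) : Term F := Term.app c []

/-- The clause `dom(c) ← ⊤`. -/
def domcClause {P F : Type} (domP : P) (c : F) : Clause P F :=
  ⟨[domAtom domP (cTerm c)], []⟩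

/-- Range-restricting a clause (Step (2) of `crr`, Step (3) of `rr`):
`H ← B` becomes `H ← B ∧ dom(x₁) ∧ ... ∧ dom(xₖ)` where `x₁,...,xₖ` are the variables
occurring in the head but not in the body. -/
def rangeRestrictClause {P F : Type} (domP : P) (C : Clause P F) : Clause P F :=
  ⟨C.heads, C.body ++
    ((C.headVars.filter (fun v => v ∉ C.bodyVars)).dedup).map
      (fun v => domAtom domP (Term.var v))⟩

/-- The argument list of the term abstraction of an atom: argument positions holding
non-variable terms are replaced by fresh variables. -/
def abstrArgs {F : Type} (base : ℕ) (ts : List (Term F)) : List (Term F) :=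
  ts.mapIdx (fun i t => if t.isVar then t else Term.var (base + i))

/-- Step (2) of the `rr` transformation: for each clause `H ← B` of `M`, each body atom
`P(t₁,...,tₙ)` of `B` with term abstraction `P(s₁,...,sₙ)` and abstraction substitution `α`,
the clauses `dom(xᵢ)α ← P(s₁,...,sₙ)` for every `xᵢ` in the domain of `α`. -/
def step2Set {P F : Type} (domP : P) (M : Set (Clause P F)) : Set (Clause P F) :=
  { D | ∃ C ∈ M, ∃ a ∈ C.body, ∃ i : Fin a.args.length,
        (a.args.get i).isVar = false ∧
        D = ⟨[domAtom domP (a.args.get i)],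
             [⟨a.pred, abstrArgs (C.maxVar + 1) a.args⟩]⟩ }

/-- Step (4) of the `rr` transformation: the clauses `dom(xᵢ) ← P(x₁,...,xₙ)` for every
`n`-ary predicate symbol `P` of the signature and every `1 ≤ i ≤ n`. -/
def step4Set {P F : Type} (domP : P) (Ps : Set (P × ℕ)) : Set (Clause P F) :=
  { D | ∃ pn ∈ Ps, ∃ i, i < pn.2 ∧
        D = ⟨[domAtom domP (Term.var i)], [⟨pn.1, rangeVars pn.2⟩]⟩ }

/-- Step (5) of the `rr` transformation: the clauses `dom(xᵢ) ← dom(f(x₁,...,xₙ))` for every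
`n`-ary function symbol `f` of the signature and every `1 ≤ i ≤ n`. -/
def step5Set {P F : Type} (domP : P) (Fs : Set (F × ℕ)) : Set (Clause P F) :=
  { D | ∃ fn ∈ Fs, ∃ i, i < fn.2 ∧
        D = ⟨[domAtom domP (Term.var i)],
             [domAtom domP (Term.app fn.1 (rangeVars fn.2))]⟩ }

/-- The new range-restricting transformation `rr` (over the signature `σ`, with fresh unary
predicate symbol `dom` and constant `c`): the clauses of `M`, the clause `dom(c) ← ⊤` and
the Step-(2) clauses, all range-restricted by Step (3), together with the Step-(4) and
Step-(5) clauses. -/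
def rr {P F : Type} [DecidableEq P] [DecidableEq F] (σ : Sig P F) (domP : P) (c : F)
    (M : Set (Clause P F)) : Set (Clause P F) :=
  (rangeRestrictClause domP '' (M ∪ {domcClause domP c} ∪ step2Set domP M))
  ∪ step4Set domP σ.preds ∪ step5Set domP σ.funcs

/-- Step (3) of the classical transformation `crr`: the clauses
`dom(f(x₁,...,xₙ)) ← dom(x₁) ∧ ... ∧ dom(xₙ)` enumerating the Herbrand universe. -/
def crrStep3 {P F : Type} (domP : P) (Fs : Set (F × ℕ)) : Set (Clause P F) :=
  { D | ∃ fn ∈ Fs,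
        D = ⟨[domAtom domP (Term.app fn.1 (rangeVars fn.2))],
             (List.range fn.2).map (fun i => domAtom domP (Term.var i))⟩ }

/-- The classical range-restricting transformation `crr`. -/
def crr {P F : Type} [DecidableEq P] [DecidableEq F] (σ : Sig P F) (domP : P) (c : F)
    (M : Set (Clause P F)) : Set (Clause P F) :=
  (rangeRestrictClause domP '' (M ∪ {domcClause domP c})) ∪ crrStep3 domP σ.funcs

/-! ### Shifting -/

/-- Partial flattening of the arguments of a non-equational body atom: top-level proper
functional terms are replaced by fresh variables. The `j`-th body atom uses the fresh
variables `base + Nat.pair j i`. -/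
def pfArgs {P F : Type} [DecidableEq P] (eqP : P) (base j : ℕ) (a : Atom P F) : Atom P F :=
  if a.pred = eqP then a
  else ⟨a.pred, a.args.mapIdx (fun i t => if t.isPF then Term.var (base + Nat.pair j i) else t)⟩

/-- The equations `tᵢ ≈ xᵢ` introduced by partially flattening a body atom. -/
def pfEqs {P F : Type} [DecidableEq P] (eqP : P) (base j : ℕ) (a : Atom P F) :
    List (Atom P F) :=
  if a.pred = eqP then []
  else (a.args.mapIdx (fun i t => (i, t))).filterMap
        (fun p => if p.2.isPF then
            some (eqAtom eqP p.2 (Term.var (base + Nat.pair j p.1))) else none)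

/-- Partial flattening of a clause. -/
def pfClause {P F : Type} [DecidableEq P] (eqP : P) (C : Clause P F) : Clause P F :=
  ⟨C.heads,
   C.body.mapIdx (fun j a => pfArgs eqP (C.maxVar + 1) j a) ++
   (C.body.mapIdx (fun j a => pfEqs eqP (C.maxVar + 1) j a)).flatten⟩

/-- The reflexivity unit clause `x ≈ x ← ⊤`. -/
def reflClause {P F : Type} (eqP : P) : Clause P F :=
  ⟨[eqAtom eqP (Term.var 0) (Term.var 0)], []⟩

/-- The partial flattening transformation `pf`. -/
def pf {P F : Type} [DecidableEq P] (eqP : P) (M : Set (Clause P F)) : Set (Clause P F) :=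
  pfClause eqP '' M ∪ {reflClause eqP}

/-- The atom `P̄(t₁,...,tₙ)` for the atom `P(t₁,...,tₙ)`, where `bar` maps each predicate
symbol `P` to the fresh predicate symbol `P̄` uniquely associated with it. -/
def barAtom {P F : Type} (bar : P → P) (a : Atom P F) : Atom P F := ⟨bar a.pred, a.args⟩

/-- Basic shifting of a clause: the body atoms containing a proper functional term are
moved, negated (via `bar`), into the head. -/
def bsClause {P F : Type} (bar : P → P) (C : Clause P F) : Clause P F :=
  ⟨C.heads ++ (C.body.filter (fun a => a.hasPF)).map (barAtom bar),
   C.body.filter (fun a => !a.hasPF)⟩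

/-- The predicate symbols (with arities) of shifted atoms of `M`. -/
def shiftedPreds {P F : Type} (M : Set (Clause P F)) : Set (P × ℕ) :=
  { pn | ∃ C ∈ M, ∃ a ∈ C.body, a.hasPF = true ∧ pn = (a.pred, a.args.length) }

/-- The basic shifting transformation `bs`: shift deep body atoms and add the shifted atom
consistency clauses `⊥ ← P(x₁,...,xₙ) ∧ P̄(x₁,...,xₙ)`. -/
def bs {P F : Type} (bar : P → P) (M : Set (Clause P F)) : Set (Clause P F) :=
  bsClause bar '' M ∪
  { D | ∃ pn ∈ shiftedPreds M,
        D = ⟨[], [⟨pn.1, rangeVars pn.2⟩, ⟨bar pn.1, rangeVars pn.2⟩]⟩ }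

/-- The shifting transformation: `sh(M) = bs(pf(M))`. -/
def sh {P F : Type} [DecidableEq P] (eqP : P) (bar : P → P) (M : Set (Clause P F)) :
    Set (Clause P F) :=
  bs bar (pf eqP M)

/-! ### Blocking -/

/-- The head `x ≈ y ∨ x ≉ y` of the blocking clauses. -/
def blockSplitHead {P F : Type} (eqP neqP : P) : List (Atom P F) :=
  [eqAtom eqP (Term.var 0) (Term.var 1), eqAtom neqP (Term.var 0) (Term.var 1)]

/-- The clause `⊥ ← x ≈ y ∧ x ≉ y`. -/
def eqNeqBot {P F : Type} (eqP neqP : P) : Clause P F :=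
  ⟨[], [eqAtom eqP (Term.var 0) (Term.var 1), eqAtom neqP (Term.var 0) (Term.var 1)]⟩

/-- The unrestricted domain blocking transformation `blud`. -/
def blud {P F : Type} (domP eqP neqP : P) (M : Set (Clause P F)) : Set (Clause P F) :=
  M ∪ { ⟨blockSplitHead eqP neqP, [domAtom domP (Term.var 0), domAtom domP (Term.var 1)]⟩,
        eqNeqBot eqP neqP }

/-- The atom `sub(s,t)`. -/
def subAtom {P F : Type} (subP : P) (s t : Term F) : Atom P F := ⟨subP, [s, t]⟩

/-- The axioms describing the subterm relationship: `sub(x,x) ← dom(x)` and, for every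
`n`-ary function symbol `f` of the signature and `1 ≤ i ≤ n`,
`sub(x, f(x₁,...,xₙ)) ← sub(x,xᵢ) ∧ dom(x) ∧ dom(f(x₁,...,xₙ))`. -/
def subClauses {P F : Type} (domP subP : P) (Fs : Set (F × ℕ)) : Set (Clause P F) :=
  { ⟨[subAtom subP (Term.var 0) (Term.var 0)], [domAtom domP (Term.var 0)]⟩ } ∪
  { D | ∃ fn ∈ Fs, ∃ i, i < fn.2 ∧
        D = ⟨[subAtom subP (Term.var fn.2) (Term.app fn.1 (rangeVars fn.2))],
             [subAtom subP (Term.var fn.2) (Term.var i),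
              domAtom domP (Term.var fn.2),
              domAtom domP (Term.app fn.1 (rangeVars fn.2))]⟩ }

/-- The subterm domain blocking transformation `blsd`. -/
def blsd {P F : Type} (σ : Sig P F) (domP eqP neqP subP : P) (M : Set (Clause P F)) :
    Set (Clause P F) :=
  M ∪ subClauses domP subP σ.funcs ∪
  { ⟨blockSplitHead eqP neqP, [subAtom subP (Term.var 0) (Term.var 1)]⟩,
    eqNeqBot eqP neqP }

/-- The subterm predicate blocking transformation `blsp`. -/
def blsp {P F : Type} (σ : Sig P F) (domP eqP neqP subP : P) (M : Set (Clause P F)) :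
    Set (Clause P F) :=
  M ∪ subClauses domP subP σ.funcs ∪
  { D | ∃ p : P, (p, 1) ∈ σ.preds ∧
        D = ⟨blockSplitHead eqP neqP,
             [subAtom subP (Term.var 0) (Term.var 1),
              ⟨p, [Term.var 0]⟩, ⟨p, [Term.var 1]⟩]⟩ } ∪
  { eqNeqBot eqP neqP }

/-- The unrestricted predicate blocking transformation `blup`. -/
def blup {P F : Type} (σ : Sig P F) (domP eqP neqP : P) (M : Set (Clause P F)) :
    Set (Clause P F) :=
  M ∪ { D | ∃ p : P, (p, 1) ∈ σ.preds ∧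
        D = ⟨blockSplitHead eqP neqP, [⟨p, [Term.var 0]⟩, ⟨p, [Term.var 1]⟩]⟩ } ∪
  { eqNeqBot eqP neqP }

/-! ### Combined transformations -/

/-- The base transformations `rr`, `sh∘rr`, `crr`, `sh∘crr`
(composition read left-to-right, so `(sh∘rr)(M) = rr(sh(M))`). -/
inductive BaseTr | rr | shrr | crr | shcrr

/-- The optional blocking transformations. -/
inductive BlockTr | id | blsd | blsp | blud | blup

def applyBase {P F : Type} [DecidableEq P] [DecidableEq F] (σ : Sig P F) (domP : P) (c : F)
    (eqP : P) (bar : P → P) : BaseTr → Set (Clause P F) → Set (Clause P F)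
  | .rr, M => rr σ domP c M
  | .shrr, M => rr σ domP c (sh eqP bar M)
  | .crr, M => crr σ domP c M
  | .shcrr, M => crr σ domP c (sh eqP bar M)

def applyBlock {P F : Type} (σ : Sig P F) (domP eqP neqP subP : P) :
    BlockTr → Set (Clause P F) → Set (Clause P F)
  | .id, M => M
  | .blsd, M => blsd σ domP eqP neqP subP M
  | .blsp, M => blsp σ domP eqP neqP subP M
  | .blud, M => blud domP eqP neqP M
  | .blup, M => blup σ domP eqP neqP M

/-- A combined transformation: a base transformation optionally followed by a blocking
transformation (composition read left-to-right). -/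
def applyTr {P F : Type} [DecidableEq P] [DecidableEq F] (σ : Sig P F) (domP : P) (c : F)
    (eqP neqP subP : P) (bar : P → P) (b : BaseTr) (τ : BlockTr) (M : Set (Clause P F)) :
    Set (Clause P F) :=
  applyBlock σ domP eqP neqP subP τ (applyBase σ domP c eqP bar b M)

/-- The clause `x ≈ x ← dom(x)`. -/
def reflDomClause {P F : Type} (domP eqP : P) : Clause P F :=
  ⟨[eqAtom eqP (Term.var 0) (Term.var 0)], [domAtom domP (Term.var 0)]⟩

end BUMG

/-!
Completeness: let `J` be a model of `tr(M) ∪ {x ≈ x ← dom(x)}` and its equality axioms, and read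
every atom in `J` after collapsing the function symbols outside the signature to `c`. Collapsed
ground terms satisfy `dom` (for `rr` by `dom(x) ← x ≈ y` and reflexivity, for `crr` because its
clauses enumerate them), so the range-restricted clauses give back `M`, resp. `sh(M)`. A model of
`sh(M)` is one of `M`: instantiate each flattening variable by the term it replaces, and discard
shifted atoms `P̄(t)` with the consistency clauses.

Soundness: restrict an E-model of `M` to the predicate symbols of `M` and `≈`, and collapse the
function symbols not occurring in `M` to `c`; in the result `≈` is a congruence for all symbols.
Extend it by making `dom` and `sub` true everywhere, `≉` the complement of `≈` and each `P̄` the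
complement of `P`. Then every added clause has a true head, the blocking clauses are decided by
`≈`/`≉`, and flattened and shifted clauses hold by congruence.
-/

namespace BUMG

variable {P F : Type}

namespace Term

@[elab_as_elim]
theorem ind {motive : Term F → Prop} (var : ∀ v, motive (.var v))
    (app : ∀ f ts, (∀ t ∈ ts, motive t) → motive (.app f ts)) : ∀ t, motive t
  | .var v => var v
  | .app f ts => app f ts fun t (_ : t ∈ ts) => ind var app t
decreasing_by have := List.sizeOf_lt_of_mem ‹t ∈ ts›; simp_wf; omega

@[simp] theorem subst_var (g : ℕ → Term F) (v : ℕ) : (var v).subst g = g v := by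
  simp [subst]

@[simp] theorem subst_app (g : ℕ → Term F) (f : F) (ts : List (Term F)) :
    (app f ts).subst g = app f (ts.map (subst g)) := by
  rw [subst, List.attach_map_val]

@[simp] theorem vars_app (f : F) (ts : List (Term F)) : (app f ts).vars = ts.flatMap vars := by
  rw [vars, List.flatMap, List.flatMap, List.attach_map_val]

@[simp] theorem funcs_var (v : ℕ) : (var v : Term F).funcs = [] := by
  simp [funcs]

@[simp] theorem funcs_app (f : F) (ts : List (Term F)) :
    (app f ts).funcs = (f, ts.length) :: ts.flatMap funcs := by
  rw [funcs, List.flatMap, List.flatMap, List.attach_map_val]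

@[simp] theorem not_isGround_var (v : ℕ) : ¬ (var v : Term F).IsGround := by
  simp [IsGround, vars]

@[simp] theorem isGround_app {f : F} {ts : List (Term F)} :
    (app f ts).IsGround ↔ ∀ t ∈ ts, t.IsGround := by
  simp [IsGround, List.flatMap_eq_nil_iff]

theorem isGround_subst {g : ℕ → Term F} (hg : GroundSubst g) (t : Term F) :
    (t.subst g).IsGround := by
  induction t using Term.ind with
  | var v => simpa using hg v
  | app f ts ih => simpa using fun u hu => ih u hu

theorem subst_congr {g g' : ℕ → Term F} {t : Term F} (h : ∀ v ∈ t.vars, g v = g' v) :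
    t.subst g = t.subst g' := by
  induction t using Term.ind with
  | var v => simpa [vars] using h
  | app f ts ih =>
    simp only [subst_app, app.injEq, true_and]
    exact List.map_congr_left fun u hu =>
      ih u hu fun v hv => h v (by rw [vars_app]; exact List.mem_flatMap.2 ⟨u, hu, hv⟩)

end Term

theorem groundSubst_getD {ts : List (Term F)} {d : Term F} (hts : ∀ t ∈ ts, t.IsGround)
    (hd : d.IsGround) : GroundSubst (fun i => ts.getD i d) := by
  intro i
  dsimp only
  by_cases hi : i < ts.length
  · rw [List.getD_eq_getElem _ _ hi]
    exact hts _ (List.getElem_mem hi)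
  · rw [List.getD_eq_default _ _ (Nat.le_of_not_lt hi)]
    exact hd

theorem map_range_getD {α β : Type} (l : List α) (d : α) (f : α → β) :
    (List.range l.length).map (fun i => f (l.getD i d)) = l.map f := by
  apply List.ext_getElem
  · simp
  · intro n _ h
    rw [List.getElem_map, List.getElem_map, List.getElem_range,
      List.getD_eq_getElem l d (by simpa using h)]

theorem map_range_getD_self {α : Type} (l : List α) (d : α) :
    (List.range l.length).map (fun i => l.getD i d) = l := by
  simpa only [id, List.map_id] using map_range_getD l d id

theorem rangeVars_subst_getD {α : Type} (l : List α) (d : α) (f : α → Term F) :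
    (rangeVars l.length).map (Term.subst fun i => f (l.getD i d)) = l.map f := by
  simpa [rangeVars, Function.comp_def] using map_range_getD l d f

namespace Atom

@[simp] theorem subst_pred (a : Atom P F) (g : ℕ → Term F) : (a.subst g).pred = a.pred := rfl

@[simp] theorem subst_args (a : Atom P F) (g : ℕ → Term F) :
    (a.subst g).args = a.args.map (Term.subst g) := rfl

theorem isGround_iff {a : Atom P F} : a.IsGround ↔ ∀ t ∈ a.args, t.IsGround := by
  simp [IsGround, vars, List.flatMap_eq_nil_iff, Term.IsGround]

theorem isGround_subst {g : ℕ → Term F} (hg : GroundSubst g) (a : Atom P F) :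
    (a.subst g).IsGround := by
  simpa [isGround_iff] using fun t _ => Term.isGround_subst hg t

theorem subst_congr {g g' : ℕ → Term F} {a : Atom P F} (h : ∀ v ∈ a.vars, g v = g' v) :
    a.subst g = a.subst g' := by
  simp only [subst, mk.injEq, true_and]
  exact List.map_congr_left fun t ht =>
    Term.subst_congr fun v hv => h v (List.mem_flatMap.2 ⟨t, ht, hv⟩)

theorem mem_funcs {a : Atom P F} {t : Term F} (ht : t ∈ a.args) {fn : F × ℕ}
    (h : fn ∈ t.funcs) : fn ∈ a.funcs :=
  List.mem_flatMap.2 ⟨t, ht, h⟩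

end Atom

@[simp] theorem eqAtom_subst (eqP : P) (s t : Term F) (g : ℕ → Term F) :
    (eqAtom eqP s t).subst g = eqAtom eqP (s.subst g) (t.subst g) := rfl

@[simp] theorem domAtom_subst (domP : P) (t : Term F) (g : ℕ → Term F) :
    (domAtom domP t).subst g = domAtom domP (t.subst g) := rfl

namespace Clause

theorem mem_preds {C : Clause P F} {a : Atom P F} (ha : a ∈ C.atoms) :
    (a.pred, a.args.length) ∈ C.preds :=
  List.mem_map_of_mem ha

theorem mem_funcs {C : Clause P F} {a : Atom P F} (ha : a ∈ C.atoms) {fn : F × ℕ}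
    (h : fn ∈ a.funcs) : fn ∈ C.funcs :=
  List.mem_flatMap.2 ⟨a, ha, h⟩

theorem le_maxVar {C : Clause P F} {a : Atom P F} (ha : a ∈ C.atoms) {v : ℕ}
    (hv : v ∈ a.vars) : v ≤ C.maxVar := by
  have hC : v ∈ C.vars := List.mem_flatMap.2 ⟨a, ha, hv⟩
  unfold maxVar
  generalize C.vars = l at hC
  induction l with
  | nil => cases hC
  | cons x xs ih =>
    rcases List.mem_cons.1 hC with rfl | h
    · exact le_max_left _ _
    · exact (ih h).trans (le_max_right _ _)

end Clause

section Satisfaction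

variable {I I' : Set (Atom P F)} {C D : Clause P F}

theorem satClause_of_mem_heads {a : Atom P F} (ha : a ∈ C.heads)
    (h : ∀ g, GroundSubst g → a.subst g ∈ I) : satClause I C :=
  fun g hg _ => ⟨a, ha, h g hg⟩

theorem satClause_of_domAtom_mem_heads {domP : P}
    (hdom : ∀ t : Term F, t.IsGround → domAtom domP t ∈ I) {t : Term F}
    (ht : domAtom domP t ∈ C.heads) : satClause I C :=
  satClause_of_mem_heads ht fun _ hg => hdom _ (Term.isGround_subst hg t)

theorem satClause.mono (h : satClause I C) (hH : C.heads ⊆ D.heads) (hB : C.body ⊆ D.body) :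
    satClause I D := fun g hg hb =>
  let ⟨a, ha, hin⟩ := h g hg fun a ha => hb a (hB ha)
  ⟨a, hH ha, hin⟩

theorem satClause.of_agree (h : satClause I C)
    (hagree : ∀ a ∈ C.atoms, ∀ g, GroundSubst g → (a.subst g ∈ I ↔ a.subst g ∈ I')) :
    satClause I' C := fun g hg hb =>
  let ⟨a, ha, hin⟩ := h g hg fun a ha =>
    (hagree a (List.mem_append_right _ ha) g hg).2 (hb a ha)
  ⟨a, ha, (hagree a (List.mem_append_left _ ha) g hg).1 hin⟩

end Satisfaction

section Congruence

variable (I : Set (Atom P F)) (eqP : P)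

def FCong (fn : F × ℕ) : Prop :=
  ∀ s t : ℕ → Term F, (∀ i, (s i).IsGround) → (∀ i, (t i).IsGround) →
    (∀ i < fn.2, eqAtom eqP (s i) (t i) ∈ I) →
    eqAtom eqP (.app fn.1 ((List.range fn.2).map s)) (.app fn.1 ((List.range fn.2).map t)) ∈ I

def PCong (pn : P × ℕ) : Prop :=
  ∀ s t : ℕ → Term F, (∀ i, (s i).IsGround) → (∀ i, (t i).IsGround) →
    (∀ i < pn.2, eqAtom eqP (s i) (t i) ∈ I) →
    ⟨pn.1, (List.range pn.2).map s⟩ ∈ I → ⟨pn.1, (List.range pn.2).map t⟩ ∈ I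

structure IsCongruence (Ps : Set (P × ℕ)) (Fs : Set (F × ℕ)) : Prop where
  refl : ∀ s : Term F, s.IsGround → eqAtom eqP s s ∈ I
  symm : ∀ s t : Term F, s.IsGround → t.IsGround → eqAtom eqP s t ∈ I → eqAtom eqP t s ∈ I
  trans : ∀ s t u : Term F, s.IsGround → t.IsGround → u.IsGround →
    eqAtom eqP s t ∈ I → eqAtom eqP t u ∈ I → eqAtom eqP s u ∈ I
  fcong : ∀ fn ∈ Fs, FCong I eqP fn
  pcong : ∀ pn ∈ Ps, PCong I eqP pn

variable {I eqP}

theorem IsCongruence.mono {Ps Ps' : Set (P × ℕ)} {Fs Fs' : Set (F × ℕ)}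
    (h : IsCongruence I eqP Ps Fs) (hP : Ps' ⊆ Ps) (hF : Fs' ⊆ Fs) :
    IsCongruence I eqP Ps' Fs' :=
  ⟨h.refl, h.symm, h.trans, fun fn hfn => h.fcong fn (hF hfn), fun pn hpn => h.pcong pn (hP hpn)⟩

theorem IsCongruence.of_eqAtom_iff {I' : Set (Atom P F)} {Ps Ps' : Set (P × ℕ)}
    {Fs : Set (F × ℕ)} (h : IsCongruence I eqP Ps Fs)
    (heq : ∀ s t : Term F, eqAtom eqP s t ∈ I' ↔ eqAtom eqP s t ∈ I)
    (hP : ∀ pn ∈ Ps', PCong I' eqP pn) : IsCongruence I' eqP Ps' Fs where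
  refl s hs := (heq s s).2 (h.refl s hs)
  symm s t hs ht hst := (heq t s).2 (h.symm s t hs ht ((heq s t).1 hst))
  trans s t u hs ht hu hst htu :=
    (heq s u).2 (h.trans s t u hs ht hu ((heq s t).1 hst) ((heq t u).1 htu))
  fcong fn hfn s t hs ht hst :=
    (heq _ _).2 (h.fcong fn hfn s t hs ht fun i hi => (heq _ _).1 (hst i hi))
  pcong := hP

theorem IsCongruence.insert_eq {Ps : Set (P × ℕ)} {Fs : Set (F × ℕ)}
    (h : IsCongruence I eqP Ps Fs) : IsCongruence I eqP (insert (eqP, 2) Ps) Fs := by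
  refine ⟨h.refl, h.symm, h.trans, h.fcong, ?_⟩
  rintro pn (rfl | hpn)
  · intro s t hs ht hst hbase
    have h0 := hst 0 (by norm_num)
    have h1 := hst 1 (by norm_num)
    simp only [show List.range 2 = [0, 1] from rfl, List.map_cons, List.map_nil] at hbase ⊢
    exact h.trans _ _ _ (ht 0) (hs 1) (ht 1)
      (h.trans _ _ _ (ht 0) (hs 0) (hs 1) (h.symm _ _ (hs 0) (ht 0) h0) hbase) h1
  · exact h.pcong pn hpn

theorem IsCongruence.not_mem {Ps : Set (P × ℕ)} {Fs : Set (F × ℕ)}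
    (h : IsCongruence I eqP Ps Fs) {pn : P × ℕ} (hpn : pn ∈ Ps) {s t : ℕ → Term F}
    (hs : ∀ i, (s i).IsGround) (ht : ∀ i, (t i).IsGround)
    (hst : ∀ i < pn.2, eqAtom eqP (s i) (t i) ∈ I)
    (hnot : (⟨pn.1, (List.range pn.2).map s⟩ : Atom P F) ∉ I) :
    (⟨pn.1, (List.range pn.2).map t⟩ : Atom P F) ∉ I := fun hin =>
  hnot (h.pcong pn hpn t s ht hs (fun i hi => h.symm _ _ (hs i) (ht i) (hst i hi)) hin)

theorem IsCongruence.mem_of_forall₂ {Ps : Set (P × ℕ)} {Fs : Set (F × ℕ)}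
    (h : IsCongruence I eqP Ps Fs) {q : P} {us vs : List (Term F)} (hq : (q, us.length) ∈ Ps)
    (hus : ∀ u ∈ us, u.IsGround) (hvs : ∀ v ∈ vs, v.IsGround)
    (huv : List.Forall₂ (fun u v => eqAtom eqP u v ∈ I) us vs)
    (hu : (⟨q, us⟩ : Atom P F) ∈ I) : (⟨q, vs⟩ : Atom P F) ∈ I := by
  obtain ⟨hlen, hget⟩ := List.forall₂_iff_get.1 huv
  cases us with
  | nil => simpa [List.length_eq_zero_iff.1 hlen.symm] using hu
  | cons d us' =>
    have hd : d.IsGround := hus d List.mem_cons_self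
    have key := h.pcong _ hq (fun i => (d :: us').getD i d) (fun i => vs.getD i d)
      (groundSubst_getD hus hd) (groundSubst_getD hvs hd) (fun i hi => by
        rw [List.getD_eq_getElem _ _ hi, List.getD_eq_getElem _ _ (hlen ▸ hi)]
        simpa using hget i hi (hlen ▸ hi))
      (by rwa [map_range_getD_self])
    rwa [hlen, map_range_getD_self] at key

end Congruence

section EqualityAxioms

variable {I : Set (Atom P F)} {eqP : P}

/-- The substitution `xᵢ ↦ s i`, `yᵢ ↦ t i` for the variables `xᵢ = 2i`, `yᵢ = 2i+1` of the
congruence axioms. -/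
def pairSubst (s t : ℕ → Term F) : ℕ → Term F :=
  fun v => if v % 2 = 0 then s (v / 2) else t (v / 2)

@[simp] theorem pairSubst_two_mul (s t : ℕ → Term F) (i : ℕ) : pairSubst s t (2 * i) = s i := by
  simp [pairSubst]

@[simp] theorem pairSubst_two_mul_add_one (s t : ℕ → Term F) (i : ℕ) :
    pairSubst s t (2 * i + 1) = t i := by
  simp [pairSubst, Nat.add_mod, Nat.add_div]

theorem groundSubst_pairSubst {s t : ℕ → Term F} (hs : ∀ i, (s i).IsGround)
    (ht : ∀ i, (t i).IsGround) : GroundSubst (pairSubst s t) := by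
  intro v
  unfold pairSubst
  split
  · exact hs _
  · exact ht _

theorem xsList_subst (n : ℕ) (g : ℕ → Term F) :
    (xsList n).map (Term.subst g) = (List.range n).map fun i => g (2 * i) := by
  simp [xsList, Function.comp_def]

theorem ysList_subst (n : ℕ) (g : ℕ → Term F) :
    (ysList n).map (Term.subst g) = (List.range n).map fun i => g (2 * i + 1) := by
  simp [ysList, Function.comp_def]

theorem xsList_subst_pairSubst (n : ℕ) (s t : ℕ → Term F) :
    (xsList n).map (Term.subst (pairSubst s t)) = (List.range n).map s := by
  simp [xsList_subst]

theorem ysList_subst_pairSubst (n : ℕ) (s t : ℕ → Term F) :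
    (ysList n).map (Term.subst (pairSubst s t)) = (List.range n).map t := by
  simp [ysList_subst]

theorem forall_eqConjList_subst_iff (n : ℕ) (g : ℕ → Term F) :
    (∀ a ∈ (eqConjList eqP n : List (Atom P F)), a.subst g ∈ I) ↔
      ∀ i < n, eqAtom eqP (g (2 * i)) (g (2 * i + 1)) ∈ I := by
  simp [eqConjList]

theorem satClause_reflAxiom_iff :
    satClause I ⟨[eqAtom eqP (.var 0) (.var 0)], []⟩ ↔
      ∀ s : Term F, s.IsGround → eqAtom eqP s s ∈ I := by
  refine ⟨fun h s hs => ?_, fun h g hg _ => ⟨_, List.mem_singleton_self _, ?_⟩⟩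
  · simpa using h (fun _ => s) (fun _ => hs) (by simp)
  · simpa using h _ (hg 0)

theorem satClause_symmAxiom_iff :
    satClause I ⟨[eqAtom eqP (.var 1) (.var 0)], [eqAtom eqP (.var 0) (.var 1)]⟩ ↔
      ∀ s t : Term F, s.IsGround → t.IsGround → eqAtom eqP s t ∈ I → eqAtom eqP t s ∈ I := by
  refine ⟨fun h s t hs ht hst => ?_, fun h g hg hb => ⟨_, List.mem_singleton_self _, ?_⟩⟩
  · simpa using h (fun i => [s, t].getD i s) (groundSubst_getD (by simp [hs, ht]) hs)
      (by simpa using hst)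
  · simpa using h _ _ (hg 0) (hg 1) (by simpa using hb)

theorem satClause_transAxiom_iff :
    satClause I ⟨[eqAtom eqP (.var 0) (.var 2)],
      [eqAtom eqP (.var 0) (.var 1), eqAtom eqP (.var 1) (.var 2)]⟩ ↔
      ∀ s t u : Term F, s.IsGround → t.IsGround → u.IsGround →
        eqAtom eqP s t ∈ I → eqAtom eqP t u ∈ I → eqAtom eqP s u ∈ I := by
  refine ⟨fun h s t u hs ht hu hst htu => ?_, fun h g hg hb => ⟨_, List.mem_singleton_self _, ?_⟩⟩
  · simpa using h (fun i => [s, t, u].getD i s) (groundSubst_getD (by simp [hs, ht, hu]) hs)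
      (by simpa using ⟨hst, htu⟩)
  · simp only [List.mem_cons, List.not_mem_nil, or_false, forall_eq_or_imp, forall_eq,
      eqAtom_subst, Term.subst_var] at hb
    simpa using h _ _ _ (hg 0) (hg 1) (hg 2) hb.1 hb.2

theorem satClause_fcongAxiom_iff (fn : F × ℕ) :
    satClause I ⟨[eqAtom eqP (.app fn.1 (xsList fn.2)) (.app fn.1 (ysList fn.2))],
      eqConjList eqP fn.2⟩ ↔ FCong I eqP fn := by
  refine ⟨fun h s t hs ht hst => ?_, fun h g hg hb => ⟨_, List.mem_singleton_self _, ?_⟩⟩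
  · obtain ⟨a, ha, hin⟩ := h (pairSubst s t) (groundSubst_pairSubst hs ht)
      ((forall_eqConjList_subst_iff _ _).2 fun i hi => by simpa using hst i hi)
    rw [List.mem_singleton.1 ha] at hin
    simpa [xsList_subst_pairSubst, ysList_subst_pairSubst] using hin
  · have := h _ _ (fun i => hg (2 * i)) (fun i => hg (2 * i + 1))
      ((forall_eqConjList_subst_iff _ _).1 hb)
    simpa [xsList_subst, ysList_subst] using this

theorem satClause_pcongAxiom_iff (pn : P × ℕ) :
    satClause I ⟨[⟨pn.1, ysList pn.2⟩], ⟨pn.1, xsList pn.2⟩ :: eqConjList eqP pn.2⟩ ↔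
      PCong I eqP pn := by
  refine ⟨fun h s t hs ht hst hbase => ?_, fun h g hg hb => ⟨_, List.mem_singleton_self _, ?_⟩⟩
  · obtain ⟨a, ha, hin⟩ := h (pairSubst s t) (groundSubst_pairSubst hs ht) (by
      rw [List.forall_mem_cons, forall_eqConjList_subst_iff]
      exact ⟨by simpa [Atom.subst, xsList_subst_pairSubst] using hbase,
        fun i hi => by simpa using hst i hi⟩)
    rw [List.mem_singleton.1 ha] at hin
    simpa [Atom.subst, ysList_subst_pairSubst] using hin
  · rw [List.forall_mem_cons, forall_eqConjList_subst_iff] at hb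
    have := h _ _ (fun i => hg (2 * i)) (fun i => hg (2 * i + 1)) hb.2
      (by simpa [Atom.subst, xsList_subst] using hb.1)
    simpa [Atom.subst, ysList_subst] using this

theorem satClause_EAX_iff {Ps : Set (P × ℕ)} {Fs : Set (F × ℕ)} :
    (∀ C ∈ EAX eqP Ps Fs, satClause I C) ↔ IsCongruence I eqP Ps Fs := by
  simp only [EAX, Set.mem_union, Set.mem_insert_iff, Set.mem_singleton_iff]
  constructor
  · intro h
    exact ⟨satClause_reflAxiom_iff.1 (h _ (.inl (.inl (.inl rfl)))),
      satClause_symmAxiom_iff.1 (h _ (.inl (.inl (.inr (.inl rfl))))),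
      satClause_transAxiom_iff.1 (h _ (.inl (.inl (.inr (.inr rfl))))),
      fun fn hfn => (satClause_fcongAxiom_iff fn).1 (h _ (.inl (.inr ⟨fn, hfn, rfl⟩))),
      fun pn hpn => (satClause_pcongAxiom_iff pn).1 (h _ (.inr ⟨pn, hpn, rfl⟩))⟩
  · rintro hI C (((rfl | rfl | rfl) | ⟨fn, hfn, rfl⟩) | ⟨pn, hpn, rfl⟩)
    · exact satClause_reflAxiom_iff.2 hI.refl
    · exact satClause_symmAxiom_iff.2 hI.symm
    · exact satClause_transAxiom_iff.2 hI.trans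
    · exact (satClause_fcongAxiom_iff fn).2 (hI.fcong fn hfn)
    · exact (satClause_pcongAxiom_iff pn).2 (hI.pcong pn hpn)

end EqualityAxioms

section Restriction

variable {I : Set (Atom P F)} {eqP : P} {Ps : Set (P × ℕ)}

def restrictPreds (I : Set (Atom P F)) (Ps : Set (P × ℕ)) : Set (Atom P F) :=
  {A | A ∈ I ∧ (A.pred, A.args.length) ∈ Ps}

theorem satClause_restrictPreds {C : Clause P F} (hC : ∀ pn ∈ C.preds, pn ∈ Ps)
    (h : satClause I C) : satClause (restrictPreds I Ps) C :=
  h.of_agree fun a ha _ _ => by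
    simpa [restrictPreds] using fun _ => hC _ (Clause.mem_preds ha)

theorem IsCongruence.restrictPreds {Fs : Set (F × ℕ)} (h : IsCongruence I eqP Ps Fs)
    (heq : (eqP, 2) ∈ Ps) : IsCongruence (restrictPreds I Ps) eqP Set.univ Fs := by
  refine h.of_eqAtom_iff (fun s t => ⟨And.left, fun hst => ⟨hst, heq⟩⟩) ?_
  intro pn _ s t hs ht hst hbase
  have hpn : pn ∈ Ps := by simpa using hbase.2
  exact ⟨h.pcong pn hpn s t hs ht (fun i hi => (hst i hi).1) hbase.1, by simpa using hpn⟩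

end Restriction

open Classical in
noncomputable def Term.collapse (Fs : Set (F × ℕ)) (c : F) : Term F → Term F
  | .var v => .var v
  | .app f ts =>
      if (f, ts.length) ∈ Fs then .app f (ts.attach.map fun t => collapse Fs c t.1)
      else .app c []
decreasing_by have := List.sizeOf_lt_of_mem t.2; simp_wf; omega

noncomputable def Atom.collapse (Fs : Set (F × ℕ)) (c : F) (a : Atom P F) : Atom P F :=
  ⟨a.pred, a.args.map (Term.collapse Fs c)⟩

/-- Collapsing turns a congruence for the function symbols in `Fs` into one for all function
symbols. -/
def collapseInterp (Fs : Set (F × ℕ)) (c : F) (J : Set (Atom P F)) : Set (Atom P F) :=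
  {A | A.IsGround ∧ A.collapse Fs c ∈ J}

section Collapse

variable {Fs : Set (F × ℕ)} {c : F}

namespace Term

theorem collapse_app_of_mem {f : F} {ts : List (Term F)} (h : (f, ts.length) ∈ Fs) :
    (app f ts).collapse Fs c = app f (ts.map (collapse Fs c)) := by
  rw [collapse, if_pos h, List.attach_map_val]

theorem collapse_app_of_not_mem {f : F} {ts : List (Term F)} (h : (f, ts.length) ∉ Fs) :
    (app f ts).collapse Fs c = app c [] := by
  rw [collapse, if_neg h]

theorem isGround_collapse {t : Term F} (ht : t.IsGround) : (t.collapse Fs c).IsGround := by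
  induction t using Term.ind with
  | var v => simp at ht
  | app f ts ih =>
    by_cases hf : (f, ts.length) ∈ Fs
    · simp only [collapse_app_of_mem hf, isGround_app, List.mem_map]
      rintro _ ⟨u, hu, rfl⟩
      exact ih u hu (isGround_app.1 ht u hu)
    · simp [collapse_app_of_not_mem hf]

theorem collapse_subst {g : ℕ → Term F} {t : Term F} (ht : ∀ fn ∈ t.funcs, fn ∈ Fs) :
    (t.subst g).collapse Fs c = t.subst fun v => (g v).collapse Fs c := by
  induction t using Term.ind with
  | var v => simp
  | app f ts ih =>
    have hf : (f, (ts.map (subst g)).length) ∈ Fs := by simpa using ht _ (by simp)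
    rw [subst_app, subst_app, collapse_app_of_mem hf, List.map_map]
    congr 1
    exact List.map_congr_left fun u hu =>
      ih u hu fun fn hfn => ht fn (by simpa using Or.inr ⟨u, hu, hfn⟩)

end Term

theorem Atom.collapse_subst {g : ℕ → Term F} {a : Atom P F} (ha : ∀ fn ∈ a.funcs, fn ∈ Fs) :
    (a.subst g).collapse Fs c = a.subst fun v => (g v).collapse Fs c := by
  simp only [collapse, subst, List.map_map, mk.injEq, true_and]
  exact List.map_congr_left fun t ht => Term.collapse_subst fun fn hfn => ha fn (mem_funcs ht hfn)

variable {J : Set (Atom P F)} {eqP : P}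

theorem mem_collapseInterp_subst_iff {a : Atom P F} (ha : ∀ fn ∈ a.funcs, fn ∈ Fs)
    {g : ℕ → Term F} (hg : GroundSubst g) :
    a.subst g ∈ collapseInterp Fs c J ↔ a.subst (fun v => (g v).collapse Fs c) ∈ J := by
  simp [collapseInterp, Atom.isGround_subst hg, Atom.collapse_subst ha]

theorem satClause_collapseInterp_of_forall {C : Clause P F} (hC : ∀ fn ∈ C.funcs, fn ∈ Fs)
    (h : ∀ g, GroundSubst g → (∀ a ∈ C.body, a.subst (fun v => (g v).collapse Fs c) ∈ J) →
      ∃ a ∈ C.heads, a.subst (fun v => (g v).collapse Fs c) ∈ J) :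
    satClause (collapseInterp Fs c J) C := by
  have hiff : ∀ a ∈ C.atoms, ∀ g, GroundSubst g →
      (a.subst g ∈ collapseInterp Fs c J ↔ a.subst (fun v => (g v).collapse Fs c) ∈ J) :=
    fun a ha g hg => mem_collapseInterp_subst_iff (fun fn hfn => hC fn (Clause.mem_funcs ha hfn)) hg
  intro g hg hb
  obtain ⟨a, ha, hin⟩ := h g hg fun a ha =>
    (hiff a (List.mem_append_right _ ha) g hg).1 (hb a ha)
  exact ⟨a, ha, (hiff a (List.mem_append_left _ ha) g hg).2 hin⟩

theorem satClause_collapseInterp {C : Clause P F} (hC : ∀ fn ∈ C.funcs, fn ∈ Fs)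
    (h : satClause J C) : satClause (collapseInterp Fs c J) C :=
  satClause_collapseInterp_of_forall hC fun _ hg =>
    h _ fun v => Term.isGround_collapse (hg v)

theorem eqAtom_mem_collapseInterp_iff {s t : Term F} :
    eqAtom eqP s t ∈ collapseInterp Fs c J ↔
      s.IsGround ∧ t.IsGround ∧ eqAtom eqP (s.collapse Fs c) (t.collapse Fs c) ∈ J := by
  simp [collapseInterp, Atom.collapse, eqAtom, Atom.isGround_iff, and_assoc]

theorem IsCongruence.collapseInterp {Ps : Set (P × ℕ)} {Fs' Fs'' : Set (F × ℕ)}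
    (h : IsCongruence J eqP Ps Fs') (hF : ∀ fn ∈ Fs'', fn ∈ Fs → fn ∈ Fs') :
    IsCongruence (collapseInterp Fs c J) eqP Ps Fs'' where
  refl s hs := eqAtom_mem_collapseInterp_iff.2 ⟨hs, hs, h.refl _ (Term.isGround_collapse hs)⟩
  symm s t hs ht hst := eqAtom_mem_collapseInterp_iff.2 ⟨ht, hs, h.symm _ _
    (Term.isGround_collapse hs) (Term.isGround_collapse ht)
    (eqAtom_mem_collapseInterp_iff.1 hst).2.2⟩
  trans s t u hs ht hu hst htu := eqAtom_mem_collapseInterp_iff.2 ⟨hs, hu, h.trans _ _ _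
    (Term.isGround_collapse hs) (Term.isGround_collapse ht) (Term.isGround_collapse hu)
    (eqAtom_mem_collapseInterp_iff.1 hst).2.2 (eqAtom_mem_collapseInterp_iff.1 htu).2.2⟩
  fcong fn hfn s t hs ht hst := by
    refine eqAtom_mem_collapseInterp_iff.2 ⟨by simpa using fun i _ => hs i,
      by simpa using fun i _ => ht i, ?_⟩
    have hlen : ∀ u : ℕ → Term F, (fn.1, ((List.range fn.2).map u).length) = fn := by simp
    by_cases hfs : fn ∈ Fs
    · have := h.fcong fn (hF fn hfn hfs) _ _ (fun i => Term.isGround_collapse (hs i))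
        (fun i => Term.isGround_collapse (ht i))
        (fun i hi => (eqAtom_mem_collapseInterp_iff.1 (hst i hi)).2.2)
      rw [Term.collapse_app_of_mem ((hlen s).symm ▸ hfs),
        Term.collapse_app_of_mem ((hlen t).symm ▸ hfs)]
      simpa [List.map_map, Function.comp_def] using this
    · rw [Term.collapse_app_of_not_mem ((hlen s).symm ▸ hfs),
        Term.collapse_app_of_not_mem ((hlen t).symm ▸ hfs)]
      exact h.refl (.app c []) (by simp)
  pcong pn hpn s t hs ht hst hbase := by
    refine ⟨by simpa [Atom.isGround_iff] using fun i _ => ht i, ?_⟩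
    have := h.pcong pn hpn _ _ (fun i => Term.isGround_collapse (hs i))
      (fun i => Term.isGround_collapse (ht i))
      (fun i hi => (eqAtom_mem_collapseInterp_iff.1 (hst i hi)).2.2)
      (by simpa [Atom.collapse, List.map_map, Function.comp_def] using hbase.2)
    simpa [Atom.collapse, List.map_map, Function.comp_def] using this

end Collapse

structure AuxFresh (Ps : Set (P × ℕ)) (domP neqP subP : P) (bar : P → P) : Prop where
  dom_fresh : ∀ n, (domP, n) ∉ Ps
  neq_fresh : ∀ n, (neqP, n) ∉ Ps
  sub_fresh : ∀ n, (subP, n) ∉ Ps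
  bar_fresh : ∀ p n, (bar p, n) ∉ Ps
  sub_ne_neq : subP ≠ neqP
  bar_injective : Function.Injective bar
  bar_ne : ∀ p, bar p ≠ domP ∧ bar p ≠ neqP ∧ bar p ≠ subP

theorem AuxFresh.mono {Ps Ps' : Set (P × ℕ)} {domP neqP subP : P} {bar : P → P}
    (h : AuxFresh Ps' domP neqP subP bar) (hPs : Ps ⊆ Ps') : AuxFresh Ps domP neqP subP bar :=
  ⟨fun n hn => h.dom_fresh n (hPs hn), fun n hn => h.neq_fresh n (hPs hn),
    fun n hn => h.sub_fresh n (hPs hn), fun p n hn => h.bar_fresh p n (hPs hn),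
    h.sub_ne_neq, h.bar_injective, h.bar_ne⟩

def auxExtension (domP eqP neqP subP : P) (bar : P → P) (K : Set (Atom P F)) :
    Set (Atom P F) :=
  {A | A.IsGround ∧ (A ∈ K ∨ (A.pred, A.args.length) = (domP, 1) ∨
    (A.pred, A.args.length) = (subP, 2) ∨
    ((A.pred, A.args.length) = (neqP, 2) ∧ ⟨eqP, A.args⟩ ∉ K) ∨
    ∃ q, A.pred = bar q ∧ ⟨q, A.args⟩ ∉ K)}

section AuxExtension

variable {domP eqP neqP subP : P} {bar : P → P} {K : Set (Atom P F)} {Ps : Set (P × ℕ)}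

local notation "K⁺" => auxExtension domP eqP neqP subP bar K

theorem mem_auxExtension_iff (hKg : ∀ A ∈ K, A.IsGround)
    (hfresh : AuxFresh Ps domP neqP subP bar) {A : Atom P F}
    (hA : (A.pred, A.args.length) ∈ Ps) : A ∈ K⁺ ↔ A ∈ K := by
  refine ⟨?_, fun h => ⟨hKg A h, Or.inl h⟩⟩
  rintro ⟨_, hK | hdom | hsub | ⟨hneq, _⟩ | ⟨q, hq, _⟩⟩
  · exact hK
  · exact absurd (hdom ▸ hA) (hfresh.dom_fresh 1)
  · exact absurd (hsub ▸ hA) (hfresh.sub_fresh 2)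
  · exact absurd (hneq ▸ hA) (hfresh.neq_fresh 2)
  · exact absurd (hq ▸ hA) (hfresh.bar_fresh q _)

theorem domAtom_mem_auxExtension {t : Term F} (ht : t.IsGround) : domAtom domP t ∈ K⁺ :=
  ⟨by simpa [Atom.isGround_iff, domAtom] using ht, Or.inr (Or.inl rfl)⟩

theorem subAtom_mem_auxExtension {s t : Term F} (hs : s.IsGround) (ht : t.IsGround) :
    subAtom subP s t ∈ K⁺ :=
  ⟨by simp [Atom.isGround_iff, subAtom, hs, ht], Or.inr (Or.inr (Or.inl rfl))⟩

theorem neqAtom_mem_auxExtension_iff (hKP : ∀ A ∈ K, (A.pred, A.args.length) ∈ Ps)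
    (hfresh : AuxFresh Ps domP neqP subP bar) {s t : Term F} :
    eqAtom neqP s t ∈ K⁺ ↔ s.IsGround ∧ t.IsGround ∧ eqAtom eqP s t ∉ K := by
  have hg : (eqAtom neqP s t).IsGround ↔ s.IsGround ∧ t.IsGround := by
    simp [Atom.isGround_iff, eqAtom]
  refine ⟨?_, fun ⟨hs, ht, h⟩ => ⟨hg.2 ⟨hs, ht⟩, Or.inr (Or.inr (Or.inr (Or.inl ⟨rfl, h⟩)))⟩⟩
  rintro ⟨hgr, hK | hdom | hsub | ⟨_, hnot⟩ | ⟨q, hq, _⟩⟩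
  · exact absurd (hKP _ hK) (hfresh.neq_fresh 2)
  · simp [eqAtom] at hdom
  · exact absurd (congrArg Prod.fst hsub).symm hfresh.sub_ne_neq
  · exact ⟨(hg.1 hgr).1, (hg.1 hgr).2, hnot⟩
  · exact absurd hq.symm (hfresh.bar_ne q).2.1

theorem barAtom_mem_auxExtension_iff (hKP : ∀ A ∈ K, (A.pred, A.args.length) ∈ Ps)
    (hfresh : AuxFresh Ps domP neqP subP bar) {q : P} {ts : List (Term F)} :
    (⟨bar q, ts⟩ : Atom P F) ∈ K⁺ ↔ (∀ t ∈ ts, t.IsGround) ∧ (⟨q, ts⟩ : Atom P F) ∉ K := by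
  refine ⟨?_, fun ⟨hg, h⟩ => ⟨Atom.isGround_iff.2 hg, Or.inr (Or.inr (Or.inr (Or.inr
    ⟨q, rfl, h⟩)))⟩⟩
  rintro ⟨hgr, hK | hdom | hsub | ⟨hneq, _⟩ | ⟨q', hq, hnot⟩⟩
  · exact absurd (hKP _ hK) (hfresh.bar_fresh q _)
  · exact absurd (congrArg Prod.fst hdom) (hfresh.bar_ne q).1
  · exact absurd (congrArg Prod.fst hsub) (hfresh.bar_ne q).2.2
  · exact absurd (congrArg Prod.fst hneq) (hfresh.bar_ne q).2.1
  · obtain rfl := hfresh.bar_injective hq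
    exact ⟨Atom.isGround_iff.1 hgr, hnot⟩

theorem IsCongruence.auxExtension (h : IsCongruence K eqP Set.univ Set.univ)
    (hKg : ∀ A ∈ K, A.IsGround) (hfresh : AuxFresh Ps domP neqP subP bar) (heq : (eqP, 2) ∈ Ps) :
    IsCongruence K⁺ eqP Set.univ Set.univ := by
  have heqA : ∀ s t : Term F, eqAtom eqP s t ∈ K⁺ ↔ eqAtom eqP s t ∈ K :=
    fun s t => mem_auxExtension_iff hKg hfresh heq
  refine h.of_eqAtom_iff heqA fun pn _ s t hs ht hst hbase => ?_
  replace hst : ∀ i < pn.2, eqAtom eqP (s i) (t i) ∈ K := fun i hi => (heqA _ _).1 (hst i hi)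
  have hgt : (⟨pn.1, (List.range pn.2).map t⟩ : Atom P F).IsGround := by
    simpa [Atom.isGround_iff] using fun i _ => ht i
  obtain ⟨_, hK | hdom | hsub | ⟨hneq, hnot⟩ | ⟨q, hq, hnot⟩⟩ := hbase
  · exact ⟨hgt, Or.inl (h.pcong pn trivial s t hs ht hst hK)⟩
  · exact ⟨hgt, Or.inr (Or.inl (by simpa using hdom))⟩
  · exact ⟨hgt, Or.inr (Or.inr (Or.inl (by simpa using hsub)))⟩
  · exact ⟨hgt, Or.inr (Or.inr (Or.inr (Or.inl ⟨by simpa using hneq,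
      h.not_mem (pn := (eqP, pn.2)) trivial hs ht hst hnot⟩)))⟩
  · exact ⟨hgt, Or.inr (Or.inr (Or.inr (Or.inr ⟨q, hq,
      h.not_mem (pn := (q, pn.2)) trivial hs ht hst hnot⟩)))⟩

end AuxExtension

section Signature

variable {M N : Set (Clause P F)} {C D : Clause P F}

theorem predsOf_mono (h : M ⊆ N) : predsOf M ⊆ predsOf N :=
  fun _ ⟨C, hC, hp⟩ => ⟨C, h hC, hp⟩

theorem funcsOf_mono (h : M ⊆ N) : funcsOf M ⊆ funcsOf N :=
  fun _ ⟨C, hC, hf⟩ => ⟨C, h hC, hf⟩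

theorem Clause.preds_subset_of_atoms_subset (h : C.atoms ⊆ D.atoms) {pn : P × ℕ}
    (hpn : pn ∈ C.preds) : pn ∈ D.preds := by
  obtain ⟨a, ha, rfl⟩ := List.mem_map.1 hpn
  exact Clause.mem_preds (h ha)

theorem Clause.funcs_subset_of_atoms_subset (h : C.atoms ⊆ D.atoms) {fn : F × ℕ}
    (hfn : fn ∈ C.funcs) : fn ∈ D.funcs := by
  obtain ⟨a, ha, hfa⟩ := List.mem_flatMap.1 hfn
  exact Clause.mem_funcs (h ha) hfa

end Signature

section RangeRestriction

variable {domP : P} {C : Clause P F}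

@[simp] theorem rangeRestrictClause_heads : (rangeRestrictClause domP C).heads = C.heads := rfl

theorem body_subset_rangeRestrictClause_body : C.body ⊆ (rangeRestrictClause domP C).body :=
  List.subset_append_left _ _

theorem atoms_subset_rangeRestrictClause_atoms : C.atoms ⊆ (rangeRestrictClause domP C).atoms :=
  fun _ ha => (List.mem_append.1 ha).elim (List.mem_append_left _)
    fun h => List.mem_append_right _ (body_subset_rangeRestrictClause_body h)

theorem satClause_rangeRestrictClause {I : Set (Atom P F)} (h : satClause I C) :
    satClause I (rangeRestrictClause domP C) :=
  h.mono (by simp) body_subset_rangeRestrictClause_body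

theorem mem_rangeRestrictClause_body {a : Atom P F} (h : a ∈ (rangeRestrictClause domP C).body) :
    a ∈ C.body ∨ ∃ v, a = domAtom domP (.var v) := by
  rcases List.mem_append.1 h with h | h
  · exact .inl h
  · obtain ⟨v, -, rfl⟩ := List.mem_map.1 h
    exact .inr ⟨v, rfl⟩

theorem predsOf_subset_of_rangeRestrictClause_mem {M N : Set (Clause P F)}
    (h : ∀ C ∈ M, rangeRestrictClause domP C ∈ N) : predsOf M ⊆ predsOf N :=
  fun _ ⟨C, hC, hp⟩ => ⟨_, h C hC, Clause.preds_subset_of_atoms_subset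
    atoms_subset_rangeRestrictClause_atoms hp⟩

theorem funcsOf_subset_of_rangeRestrictClause_mem {M N : Set (Clause P F)}
    (h : ∀ C ∈ M, rangeRestrictClause domP C ∈ N) : funcsOf M ⊆ funcsOf N :=
  fun _ ⟨C, hC, hf⟩ => ⟨_, h C hC, Clause.funcs_subset_of_atoms_subset
    atoms_subset_rangeRestrictClause_atoms hf⟩

end RangeRestriction

section PartialFlattening

variable [DecidableEq P] {eqP : P} {b j : ℕ} {a : Atom P F}

@[simp] theorem pfArgs_pred : (pfArgs eqP b j a).pred = a.pred := by
  unfold pfArgs; split <;> rfl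

@[simp] theorem pfArgs_args_length : (pfArgs eqP b j a).args.length = a.args.length := by
  unfold pfArgs; split <;> simp

theorem pfArgs_of_eq (h : a.pred = eqP) : pfArgs eqP b j a = a := if_pos h

theorem pfArgs_of_ne (h : a.pred ≠ eqP) :
    pfArgs eqP b j a =
      ⟨a.pred, a.args.mapIdx fun i t => if t.isPF then .var (b + Nat.pair j i) else t⟩ :=
  if_neg h

theorem mem_pfEqs {e : Atom P F} :
    e ∈ pfEqs eqP b j a ↔ a.pred ≠ eqP ∧ ∃ i, ∃ hi : i < a.args.length,
      a.args[i].isPF ∧ eqAtom eqP a.args[i] (.var (b + Nat.pair j i)) = e := by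
  unfold pfEqs
  split
  · simp_all
  · simp_all [List.mem_filterMap]

theorem mem_funcs_pfArgs_or_pfEqs {fn : F × ℕ} :
    (fn ∈ (pfArgs eqP b j a).funcs ∨ ∃ e ∈ pfEqs eqP b j a, fn ∈ e.funcs) ↔ fn ∈ a.funcs := by
  by_cases h : a.pred = eqP
  · simp [pfArgs_of_eq h, mem_pfEqs, h]
  · simp only [pfArgs_of_ne h, mem_pfEqs, Atom.funcs, List.mem_flatMap, List.mem_mapIdx]
    constructor
    · rintro (⟨_, ⟨i, hi, rfl⟩, hfn⟩ | ⟨_, ⟨-, i, hi, hpf, rfl⟩, t, ht, hfn⟩)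
      · split at hfn
        · simp at hfn
        · exact ⟨_, List.getElem_mem hi, hfn⟩
      · simp only [eqAtom, List.mem_cons, List.not_mem_nil, or_false] at ht
        rcases ht with rfl | rfl
        · exact ⟨_, List.getElem_mem hi, hfn⟩
        · simp at hfn
    · rintro ⟨t, ht, hfn⟩
      obtain ⟨i, hi, rfl⟩ := List.getElem_of_mem ht
      by_cases hpf : a.args[i].isPF
      · exact .inr ⟨_, ⟨h, i, hi, hpf, rfl⟩, a.args[i], by simp [eqAtom], hfn⟩
      · exact .inl ⟨_, ⟨i, hi, rfl⟩, by simpa [hpf] using hfn⟩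

variable {C : Clause P F}

theorem mem_pfClause_body {a : Atom P F} :
    a ∈ (pfClause eqP C).body ↔
      (∃ j, ∃ hj : j < C.body.length, pfArgs eqP (C.maxVar + 1) j C.body[j] = a) ∨
        ∃ j, ∃ hj : j < C.body.length, a ∈ pfEqs eqP (C.maxVar + 1) j C.body[j] := by
  simp [pfClause, List.mem_mapIdx]

theorem pfArgs_mem_pfClause_body {j : ℕ} (hj : j < C.body.length) :
    pfArgs eqP (C.maxVar + 1) j C.body[j] ∈ (pfClause eqP C).body :=
  mem_pfClause_body.2 (.inl ⟨j, hj, rfl⟩)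

theorem pred_mem_of_mem_pfClause_body {a : Atom P F} (ha : a ∈ (pfClause eqP C).body) :
    (a.pred, a.args.length) ∈ C.preds ∨ (a.pred, a.args.length) = (eqP, 2) := by
  rcases mem_pfClause_body.1 ha with ⟨j, hj, rfl⟩ | ⟨j, hj, he⟩
  · exact .inl (by simpa using Clause.mem_preds (List.mem_append_right _ (List.getElem_mem hj)))
  · obtain ⟨-, i, hi, -, rfl⟩ := mem_pfEqs.1 he
    exact .inr rfl

theorem mem_funcs_pfClause {fn : F × ℕ} : fn ∈ (pfClause eqP C).funcs ↔ fn ∈ C.funcs := by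
  simp only [Clause.funcs, Clause.atoms, pfClause, List.flatMap_append, List.mem_append,
    List.mem_flatMap, List.mem_mapIdx, List.mem_flatten]
  refine or_congr Iff.rfl ⟨?_, ?_⟩
  · rintro (⟨_, ⟨j, hj, rfl⟩, hfn⟩ | ⟨e, ⟨_, ⟨j, hj, rfl⟩, he⟩, hfn⟩)
    · exact ⟨_, List.getElem_mem hj, mem_funcs_pfArgs_or_pfEqs.1 (.inl hfn)⟩
    · exact ⟨_, List.getElem_mem hj, mem_funcs_pfArgs_or_pfEqs.1 (.inr ⟨e, he, hfn⟩)⟩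
  · rintro ⟨a, ha, hfn⟩
    obtain ⟨j, hj, rfl⟩ := List.getElem_of_mem ha
    rcases mem_funcs_pfArgs_or_pfEqs.2 hfn with hfn | ⟨e, he, hfn⟩
    · exact .inl ⟨_, ⟨j, hj, rfl⟩, hfn⟩
    · exact .inr ⟨e, ⟨_, ⟨j, hj, rfl⟩, he⟩, hfn⟩

theorem predsOf_subset_predsOf_pf {M : Set (Clause P F)} : predsOf M ⊆ predsOf (pf eqP M) := by
  rintro pn ⟨C, hC, hpn⟩
  refine ⟨pfClause eqP C, .inl ⟨C, hC, rfl⟩, ?_⟩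
  obtain ⟨a, ha, rfl⟩ := List.mem_map.1 hpn
  rcases List.mem_append.1 ha with ha | ha
  · exact Clause.mem_preds (List.mem_append_left _ ha)
  · obtain ⟨j, hj, rfl⟩ := List.getElem_of_mem ha
    simpa using Clause.mem_preds
      (List.mem_append_right _ (pfArgs_mem_pfClause_body (eqP := eqP) hj))

end PartialFlattening

section Shifting

variable {bar : P → P} {C : Clause P F} {a : Atom P F}

def consistencyClause (bar : P → P) (pn : P × ℕ) : Clause P F :=
  ⟨[], [⟨pn.1, rangeVars pn.2⟩, ⟨bar pn.1, rangeVars pn.2⟩]⟩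

theorem mem_bs_iff {M : Set (Clause P F)} {D : Clause P F} :
    D ∈ bs bar M ↔ (∃ C ∈ M, bsClause bar C = D) ∨
      ∃ pn ∈ shiftedPreds M, D = consistencyClause bar pn :=
  Iff.rfl

theorem mem_bsClause_heads :
    a ∈ (bsClause bar C).heads ↔ a ∈ C.heads ∨ ∃ b ∈ C.body, b.hasPF ∧ barAtom bar b = a := by
  simp [bsClause, and_assoc]

theorem mem_bsClause_body : a ∈ (bsClause bar C).body ↔ a ∈ C.body ∧ a.hasPF = false := by
  simp [bsClause]

theorem mem_funcs_bsClause {fn : F × ℕ} : fn ∈ (bsClause bar C).funcs ↔ fn ∈ C.funcs := by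
  simp only [Clause.funcs, Clause.atoms, List.mem_flatMap, List.mem_append, mem_bsClause_heads,
    mem_bsClause_body]
  constructor
  · rintro ⟨a, (ha | ⟨b, hb, -, rfl⟩) | ⟨ha, -⟩, hfn⟩
    · exact ⟨a, .inl ha, hfn⟩
    · exact ⟨b, .inr hb, hfn⟩
    · exact ⟨a, .inr ha, hfn⟩
  · rintro ⟨a, ha | ha, hfn⟩
    · exact ⟨a, .inl (.inl ha), hfn⟩
    · cases hpf : a.hasPF
      · exact ⟨a, .inr ⟨ha, hpf⟩, hfn⟩
      · exact ⟨barAtom bar a, .inl (.inr ⟨a, ha, hpf, rfl⟩), hfn⟩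

theorem funcs_consistencyClause (pn : P × ℕ) :
    (consistencyClause bar pn : Clause P F).funcs = [] := by
  simp [consistencyClause, Clause.funcs, Clause.atoms, Atom.funcs, rangeVars]

theorem predsOf_subset_predsOf_bs {M : Set (Clause P F)} : predsOf M ⊆ predsOf (bs bar M) := by
  rintro pn ⟨C, hC, hpn⟩
  obtain ⟨a, ha, rfl⟩ := List.mem_map.1 hpn
  rcases List.mem_append.1 ha with ha | ha
  · exact ⟨_, .inl ⟨C, hC, rfl⟩,
      Clause.mem_preds (List.mem_append_left _ (mem_bsClause_heads.2 (.inl ha)))⟩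
  · cases hpf : a.hasPF
    · exact ⟨_, .inl ⟨C, hC, rfl⟩,
        Clause.mem_preds (List.mem_append_right _ (mem_bsClause_body.2 ⟨ha, hpf⟩))⟩
    · refine ⟨_, .inr ⟨_, ⟨C, hC, a, ha, hpf, rfl⟩, rfl⟩, ?_⟩
      simp [Clause.preds, Clause.atoms, rangeVars]

variable [DecidableEq P] {eqP : P}

theorem mem_sh_iff {M : Set (Clause P F)} {D : Clause P F} :
    D ∈ sh eqP bar M ↔ (∃ C ∈ M, bsClause bar (pfClause eqP C) = D) ∨
      D = reflClause eqP ∨ ∃ pn ∈ shiftedPreds (pf eqP M), D = consistencyClause bar pn := by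
  simp only [sh, mem_bs_iff, pf, Set.mem_union, Set.mem_image, Set.mem_singleton_iff]
  constructor
  · rintro (⟨_, ⟨C, hC, rfl⟩ | rfl, rfl⟩ | h)
    · exact .inl ⟨C, hC, rfl⟩
    · exact .inr (.inl (by simp [bsClause, reflClause]))
    · exact .inr (.inr h)
  · rintro (⟨C, hC, rfl⟩ | rfl | h)
    · exact .inl ⟨_, .inl ⟨C, hC, rfl⟩, rfl⟩
    · exact .inl ⟨_, .inr rfl, by simp [bsClause, reflClause]⟩
    · exact .inr h

theorem pred_mem_of_mem_shiftedPreds_pf {M : Set (Clause P F)} {pn : P × ℕ}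
    (h : pn ∈ shiftedPreds (pf eqP M)) : pn ∈ insert (eqP, 2) (predsOf M) := by
  obtain ⟨_, ⟨C, hC, rfl⟩ | rfl, a, ha, -, rfl⟩ := h
  · exact ((pred_mem_of_mem_pfClause_body ha).imp_left fun h => ⟨C, hC, h⟩).symm
  · simp [reflClause] at ha

theorem predsOf_subset_predsOf_sh {M : Set (Clause P F)} : predsOf M ⊆ predsOf (sh eqP bar M) :=
  predsOf_subset_predsOf_pf.trans predsOf_subset_predsOf_bs

theorem funcsOf_subset_funcsOf_sh {M : Set (Clause P F)} : funcsOf M ⊆ funcsOf (sh eqP bar M) :=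
  fun _ ⟨C, hC, hfn⟩ => ⟨_, mem_sh_iff.2 (.inl ⟨C, hC, rfl⟩),
    mem_funcs_bsClause.2 (mem_funcs_pfClause.2 hfn)⟩

theorem mem_funcsOf_of_mem_sh {M : Set (Clause P F)} {D : Clause P F} (hD : D ∈ sh eqP bar M)
    {fn : F × ℕ} (hfn : fn ∈ D.funcs) : fn ∈ funcsOf M := by
  rcases mem_sh_iff.1 hD with ⟨C, hC, rfl⟩ | rfl | ⟨pn, -, rfl⟩
  · exact ⟨C, hC, mem_funcs_pfClause.1 (mem_funcs_bsClause.1 hfn)⟩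
  · simp [reflClause, Clause.funcs, Clause.atoms, Atom.funcs, eqAtom] at hfn
  · simp [funcs_consistencyClause] at hfn

end Shifting

section ShiftingSemantics

variable {I : Set (Atom P F)} {bar : P → P}

theorem satClause_consistencyClause {pn : P × ℕ}
    (h : ∀ ts : List (Term F), ts.length = pn.2 → (∀ t ∈ ts, t.IsGround) →
      (⟨pn.1, ts⟩ : Atom P F) ∈ I → (⟨bar pn.1, ts⟩ : Atom P F) ∉ I) :
    satClause I (consistencyClause bar pn) := by
  intro g hg hb
  simp only [consistencyClause, List.mem_cons, List.not_mem_nil, or_false, forall_eq_or_imp,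
    forall_eq] at hb
  refine absurd hb.2 (h _ (by simp [rangeVars]) (fun t ht => ?_) hb.1)
  obtain ⟨u, -, rfl⟩ := List.mem_map.1 ht
  exact Term.isGround_subst hg u

theorem barAtom_subst_not_mem {a : Atom P F}
    (h : satClause I (consistencyClause bar (a.pred, a.args.length))) {g : ℕ → Term F}
    (hg : GroundSubst g) (ha : a.subst g ∈ I) : (barAtom bar a).subst g ∉ I := by
  intro hbar
  have hargs := rangeVars_subst_getD a.args (.var 0) (Term.subst g)
  obtain ⟨_, hnil, _⟩ := h (fun i => (a.args.getD i (.var 0)).subst g)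
    (fun _ => Term.isGround_subst hg _) (by
      simp only [consistencyClause, List.mem_cons, List.not_mem_nil, or_false, forall_eq_or_imp,
        forall_eq, Atom.subst, hargs]
      exact ⟨ha, hbar⟩)
  simp [consistencyClause] at hnil

theorem satClause_bsClause {D : Clause P F} (h : satClause I D)
    (hdec : ∀ a ∈ D.body, a.hasPF → ∀ g, GroundSubst g →
      a.subst g ∈ I ∨ (barAtom bar a).subst g ∈ I) :
    satClause I (bsClause bar D) := by
  intro g hg hb
  by_cases hall : ∀ a ∈ D.body, a.subst g ∈ I
  · obtain ⟨a, ha, hin⟩ := h g hg hall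
    exact ⟨a, mem_bsClause_heads.2 (.inl ha), hin⟩
  · push Not at hall
    obtain ⟨a, ha, hnot⟩ := hall
    have hpf : a.hasPF := by
      by_contra hpf
      exact hnot (hb a (mem_bsClause_body.2 ⟨ha, by simpa using hpf⟩))
    exact ⟨_, mem_bsClause_heads.2 (.inr ⟨a, ha, hpf, rfl⟩),
      (hdec a ha hpf g hg).resolve_left hnot⟩

theorem satClause_of_satClause_bsClause {D : Clause P F} (h : satClause I (bsClause bar D))
    (hcons : ∀ a ∈ D.body, a.hasPF → satClause I (consistencyClause bar (a.pred, a.args.length))) :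
    satClause I D := by
  intro g hg hb
  obtain ⟨a, ha, hin⟩ := h g hg fun a ha => hb a (mem_bsClause_body.1 ha).1
  rcases mem_bsClause_heads.1 ha with ha | ⟨b, hb', hpf, rfl⟩
  · exact ⟨a, ha, hin⟩
  · exact absurd hin (barAtom_subst_not_mem (hcons b hb' hpf) hg (hb b hb'))

/-- Extends `g` to the fresh variables of `pfClause eqP C`, sending the variable that replaces
the `i`-th argument of the `j`-th body atom to the `g`-instance of that argument. -/
def pfSubst (C : Clause P F) (g : ℕ → Term F) (v : ℕ) : Term F :=
  if v ≤ C.maxVar then g v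
  else
    let p := Nat.unpair (v - (C.maxVar + 1))
    ((C.body[p.1]?.bind fun a => a.args[p.2]?).getD (.var 0)).subst g

variable {C : Clause P F} {g : ℕ → Term F}

theorem groundSubst_pfSubst (hg : GroundSubst g) : GroundSubst (pfSubst C g) := by
  intro v
  unfold pfSubst
  split
  · exact hg v
  · exact Term.isGround_subst hg _

theorem pfSubst_fresh {i j : ℕ} (hj : j < C.body.length) (hi : i < C.body[j].args.length) :
    pfSubst C g (C.maxVar + 1 + Nat.pair j i) = C.body[j].args[i].subst g := by
  have hfresh : ¬ C.maxVar + 1 + Nat.pair j i ≤ C.maxVar := by omega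
  simp [pfSubst, hfresh, hj, hi]

theorem Atom.subst_pfSubst {a : Atom P F} (ha : a ∈ C.atoms) : a.subst (pfSubst C g) = a.subst g :=
  Atom.subst_congr fun _ hv => if_pos (Clause.le_maxVar ha hv)

theorem subst_pfSubst_arg {i j : ℕ} (hj : j < C.body.length) (hi : i < C.body[j].args.length) :
    C.body[j].args[i].subst (pfSubst C g) = C.body[j].args[i].subst g :=
  Term.subst_congr fun _ hv => if_pos (Clause.le_maxVar (List.mem_append_right _
    (List.getElem_mem hj)) (List.mem_flatMap.2 ⟨_, List.getElem_mem hi, hv⟩))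

variable [DecidableEq P] {eqP : P}

theorem satClause_pfClause {Ps : Set (P × ℕ)} {Fs : Set (F × ℕ)}
    (hI : IsCongruence I eqP Ps Fs) (hP : ∀ pn ∈ C.preds, pn ∈ Ps) (h : satClause I C) :
    satClause I (pfClause eqP C) := by
  intro g hg hb
  refine h g hg fun a ha => ?_
  obtain ⟨j, hj, rfl⟩ := List.getElem_of_mem ha
  have hargs := hb _ (pfArgs_mem_pfClause_body hj)
  by_cases heq : C.body[j].pred = eqP
  · rwa [pfArgs_of_eq heq] at hargs
  · rw [pfArgs_of_ne heq] at hargs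
    have hground : ∀ ts : List (Term F), ∀ u ∈ ts.map (Term.subst g), u.IsGround := by
      intro ts u hu
      obtain ⟨t, -, rfl⟩ := List.mem_map.1 hu
      exact Term.isGround_subst hg t
    refine hI.mem_of_forall₂ (by simpa using hP _ (Clause.mem_preds
      (List.mem_append_right _ ha))) (hground _) (hground _) ?_ hargs
    refine List.forall₂_iff_get.2 ⟨by simp, fun i h₁ _ => ?_⟩
    have hi : i < C.body[j].args.length := by simpa using h₁
    simp only [List.get_eq_getElem, List.getElem_map, List.getElem_mapIdx]
    split
    · next hpf =>
      have he := hb _ (mem_pfClause_body.2 (.inr ⟨j, hj, mem_pfEqs.2 ⟨heq, i, hi, hpf, rfl⟩⟩))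
      rw [eqAtom_subst] at he
      exact hI.symm _ _ (Term.isGround_subst hg _) (Term.isGround_subst hg _) he
    · exact hI.refl _ (Term.isGround_subst hg _)

theorem pfArgs_subst_pfSubst {j : ℕ} (hj : j < C.body.length) :
    (pfArgs eqP (C.maxVar + 1) j C.body[j]).subst (pfSubst C g) = C.body[j].subst g := by
  have hmem : C.body[j] ∈ C.atoms := List.mem_append_right _ (List.getElem_mem hj)
  by_cases heq : C.body[j].pred = eqP
  · rw [pfArgs_of_eq heq, Atom.subst_pfSubst hmem]
  · rw [pfArgs_of_ne heq]
    simp only [Atom.subst, Atom.mk.injEq, true_and]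
    refine List.ext_getElem (by simp) fun i h₁ _ => ?_
    have hi : i < C.body[j].args.length := by simpa using h₁
    simp only [List.getElem_map, List.getElem_mapIdx]
    split
    · rw [Term.subst_var, pfSubst_fresh hj hi]
    · exact subst_pfSubst_arg hj hi

/-- Under `pfSubst` the new equations `tᵢ ≈ xᵢ` become instances of reflexivity. -/
theorem satClause_of_satClause_pfClause (hR : ∀ s : Term F, s.IsGround → eqAtom eqP s s ∈ I)
    (h : satClause I (pfClause eqP C)) : satClause I C := by
  intro g hg hb
  obtain ⟨a, ha, hin⟩ := h (pfSubst C g) (groundSubst_pfSubst hg) fun a ha => by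
    rcases mem_pfClause_body.1 ha with ⟨j, hj, rfl⟩ | ⟨j, hj, he⟩
    · rw [pfArgs_subst_pfSubst hj]
      exact hb _ (List.getElem_mem hj)
    · obtain ⟨-, i, hi, -, rfl⟩ := mem_pfEqs.1 he
      rw [eqAtom_subst, Term.subst_var, pfSubst_fresh hj hi, subst_pfSubst_arg hj hi]
      exact hR _ (Term.isGround_subst hg _)
  exact ⟨a, ha, by rwa [Atom.subst_pfSubst (C := C) (List.mem_append_left _ ha)] at hin⟩

theorem satClause_of_satClause_sh {M : Set (Clause P F)}
    (hR : ∀ s : Term F, s.IsGround → eqAtom eqP s s ∈ I)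
    (h : ∀ D ∈ sh eqP bar M, satClause I D) : ∀ C ∈ M, satClause I C := fun C hC =>
  satClause_of_satClause_pfClause hR <| satClause_of_satClause_bsClause
    (h _ (mem_sh_iff.2 (.inl ⟨C, hC, rfl⟩))) fun a ha hpf =>
      h _ (mem_sh_iff.2 (.inr (.inr ⟨_, ⟨_, .inl ⟨C, hC, rfl⟩, a, ha, hpf, rfl⟩, rfl⟩)))

end ShiftingSemantics

section Blocking

variable {eqP domP : P} {σ : Sig P F} {I : Set (Atom P F)}

theorem subset_applyBlock (τ : BlockTr) (subP neqP : P) (N : Set (Clause P F)) :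
    N ⊆ applyBlock σ domP eqP neqP subP τ N := by
  cases τ
  exacts [subset_rfl, fun _ h => .inl (.inl h), fun _ h => .inl (.inl (.inl h)),
    fun _ h => .inl h, fun _ h => .inl (.inl h)]

theorem satClause_applyBlock (τ : BlockTr) {neqP subP : P}
    (hsub : ∀ s t : Term F, s.IsGround → t.IsGround → subAtom subP s t ∈ I)
    (hsplit : ∀ s t : Term F, s.IsGround → t.IsGround →
      (eqAtom eqP s t ∈ I ↔ eqAtom neqP s t ∉ I))
    {N : Set (Clause P F)} (hN : ∀ C ∈ N, satClause I C) :
    ∀ C ∈ applyBlock σ domP eqP neqP subP τ N, satClause I C := by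
  have hsplitC : ∀ body, satClause I (⟨blockSplitHead eqP neqP, body⟩ : Clause P F) :=
    fun _ g hg _ => by
      by_cases heq : eqAtom eqP (g 0) (g 1) ∈ I
      · exact ⟨_, List.mem_cons_self, by simpa using heq⟩
      · exact ⟨_, List.mem_cons_of_mem _ List.mem_cons_self,
          by simpa using not_imp_comm.1 (hsplit _ _ (hg 0) (hg 1)).2 heq⟩
  have hbot : satClause I (eqNeqBot eqP neqP : Clause P F) := fun g hg hb => by
    simp only [eqNeqBot, List.mem_cons, List.not_mem_nil, or_false, forall_eq_or_imp,
      forall_eq, eqAtom_subst, Term.subst_var] at hb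
    exact absurd hb.2 ((hsplit _ _ (hg 0) (hg 1)).1 hb.1)
  have hsubC : ∀ C ∈ subClauses domP subP σ.funcs, satClause I C := by
    rintro _ (rfl | ⟨_, -, _, -, rfl⟩) <;>
      exact satClause_of_mem_heads (List.mem_singleton_self _) fun g hg =>
        hsub _ _ (Term.isGround_subst hg _) (Term.isGround_subst hg _)
  cases τ
  · exact hN
  · rintro _ ((hC | hC) | rfl | rfl)
    exacts [hN _ hC, hsubC _ hC, hsplitC _, hbot]
  · rintro _ (((hC | hC) | ⟨_, -, rfl⟩) | rfl)
    exacts [hN _ hC, hsubC _ hC, hsplitC _, hbot]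
  · rintro _ (hC | rfl | rfl)
    exacts [hN _ hC, hsplitC _, hbot]
  · rintro _ ((hC | ⟨_, -, rfl⟩) | rfl)
    exacts [hN _ hC, hsplitC _, hbot]

end Blocking

section Transformations

variable [DecidableEq P] {eqP : P} {bar : P → P} {I : Set (Atom P F)} {M : Set (Clause P F)}

def BarComplement (I : Set (Atom P F)) (bar : P → P) (Ps : Set (P × ℕ)) : Prop :=
  ∀ pn ∈ Ps, ∀ ts : List (Term F), ts.length = pn.2 → (∀ t ∈ ts, t.IsGround) →
    ((⟨bar pn.1, ts⟩ : Atom P F) ∈ I ↔ (⟨pn.1, ts⟩ : Atom P F) ∉ I)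

def BaseTr.shiftStep (eqP : P) (bar : P → P) : BaseTr → Set (Clause P F) → Set (Clause P F)
  | .rr, M => M
  | .crr, M => M
  | .shrr, M => sh eqP bar M
  | .shcrr, M => sh eqP bar M

theorem predsOf_subset_predsOf_shiftStep (b : BaseTr) :
    predsOf M ⊆ predsOf (b.shiftStep eqP bar M) := by
  cases b
  exacts [subset_rfl, predsOf_subset_predsOf_sh, subset_rfl, predsOf_subset_predsOf_sh]

theorem funcsOf_subset_funcsOf_shiftStep (b : BaseTr) :
    funcsOf M ⊆ funcsOf (b.shiftStep eqP bar M) := by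
  cases b
  exacts [subset_rfl, funcsOf_subset_funcsOf_sh, subset_rfl, funcsOf_subset_funcsOf_sh]

theorem mem_funcsOf_of_mem_shiftStep {b : BaseTr} {D : Clause P F}
    (hD : D ∈ b.shiftStep eqP bar M) {fn : F × ℕ} (hfn : fn ∈ D.funcs) : fn ∈ funcsOf M := by
  cases b
  exacts [⟨D, hD, hfn⟩, mem_funcsOf_of_mem_sh hD hfn, ⟨D, hD, hfn⟩, mem_funcsOf_of_mem_sh hD hfn]

theorem satClause_of_satClause_shiftStep (b : BaseTr)
    (hR : ∀ s : Term F, s.IsGround → eqAtom eqP s s ∈ I)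
    (h : ∀ D ∈ b.shiftStep eqP bar M, satClause I D) : ∀ C ∈ M, satClause I C := by
  cases b
  exacts [h, satClause_of_satClause_sh hR h, h, satClause_of_satClause_sh hR h]

theorem satClause_sh (hI : IsCongruence I eqP Set.univ Set.univ) (hM : ∀ C ∈ M, satClause I C)
    (hbar : BarComplement I bar (insert (eqP, 2) (predsOf M))) :
    ∀ D ∈ sh eqP bar M, satClause I D := by
  intro D hD
  rcases mem_sh_iff.1 hD with ⟨C, hC, rfl⟩ | rfl | ⟨pn, hpn, rfl⟩
  · refine satClause_bsClause (satClause_pfClause hI (fun _ _ => trivial) (hM C hC))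
      fun a ha _ g hg => or_iff_not_imp_left.2 fun hnot => ?_
    have hpn : (a.pred, a.args.length) ∈ insert (eqP, 2) (predsOf M) :=
      ((pred_mem_of_mem_pfClause_body ha).imp_left fun h => ⟨C, hC, h⟩).symm
    exact (hbar _ hpn (a.args.map (Term.subst g)) (by simp)
      (Atom.isGround_iff.1 (Atom.isGround_subst hg a))).2 hnot
  · exact satClause_reflAxiom_iff.2 hI.refl
  · exact satClause_consistencyClause fun ts hlen hts hin =>
      not_not.2 hin ∘ (hbar pn (pred_mem_of_mem_shiftedPreds_pf hpn) ts hlen hts).1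

theorem satClause_shiftStep (b : BaseTr) (hI : IsCongruence I eqP Set.univ Set.univ)
    (hM : ∀ C ∈ M, satClause I C)
    (hbar : BarComplement I bar (insert (eqP, 2) (predsOf M))) :
    ∀ D ∈ b.shiftStep eqP bar M, satClause I D := by
  cases b
  exacts [hM, satClause_sh hI hM hbar, hM, satClause_sh hI hM hbar]

variable [DecidableEq F] {σ : Sig P F} {domP : P} {c : F}

theorem rangeRestrictClause_mem_applyBase {b : BaseTr} {C : Clause P F}
    (h : C ∈ b.shiftStep eqP bar M) :
    rangeRestrictClause domP C ∈ applyBase σ domP c eqP bar b M := by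
  cases b
  exacts [.inl (.inl ⟨C, .inl (.inl h), rfl⟩), .inl (.inl ⟨C, .inl (.inl h), rfl⟩),
    .inl ⟨C, .inl h, rfl⟩, .inl ⟨C, .inl h, rfl⟩]

theorem predsOf_subset_predsOf_applyBase (b : BaseTr) :
    predsOf M ⊆ predsOf (applyBase σ domP c eqP bar b M) :=
  (predsOf_subset_predsOf_shiftStep b).trans
    (predsOf_subset_of_rangeRestrictClause_mem fun _ => rangeRestrictClause_mem_applyBase)

theorem funcsOf_subset_funcsOf_applyBase (b : BaseTr) :
    funcsOf M ⊆ funcsOf (applyBase σ domP c eqP bar b M) :=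
  (funcsOf_subset_funcsOf_shiftStep b).trans
    (funcsOf_subset_of_rangeRestrictClause_mem fun _ => rangeRestrictClause_mem_applyBase)

theorem satClause_rr (hdom : ∀ t : Term F, t.IsGround → domAtom domP t ∈ I)
    {M₀ : Set (Clause P F)} (h : ∀ C ∈ M₀, satClause I C) :
    ∀ C ∈ rr σ domP c M₀, satClause I C := by
  rintro _ ((⟨C, (hC | rfl) | ⟨_, -, _, -, _, -, rfl⟩, rfl⟩ | ⟨_, -, _, -, rfl⟩) |
    ⟨_, -, _, -, rfl⟩)
  · exact satClause_rangeRestrictClause (h C hC)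
  all_goals exact satClause_of_domAtom_mem_heads hdom (List.mem_singleton_self _)

theorem satClause_crr (hdom : ∀ t : Term F, t.IsGround → domAtom domP t ∈ I)
    {M₀ : Set (Clause P F)} (h : ∀ C ∈ M₀, satClause I C) :
    ∀ C ∈ crr σ domP c M₀, satClause I C := by
  rintro _ (⟨C, hC | rfl, rfl⟩ | ⟨_, -, rfl⟩)
  · exact satClause_rangeRestrictClause (h C hC)
  all_goals exact satClause_of_domAtom_mem_heads hdom (List.mem_singleton_self _)

theorem satClause_applyBase (b : BaseTr) (hdom : ∀ t : Term F, t.IsGround → domAtom domP t ∈ I)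
    (h : ∀ C ∈ b.shiftStep eqP bar M, satClause I C) :
    ∀ C ∈ applyBase σ domP c eqP bar b M, satClause I C := by
  cases b
  exacts [satClause_rr hdom h, satClause_rr hdom h, satClause_crr hdom h, satClause_crr hdom h]

end Transformations

section Completeness

variable {domP eqP : P} {c : F} {J : Set (Atom P F)}

theorem satClause_collapseInterp_of_rangeRestrict {Fs : Set (F × ℕ)} {C : Clause P F}
    (hC : ∀ fn ∈ C.funcs, fn ∈ Fs)
    (hdom : ∀ t : Term F, t.IsGround → domAtom domP (t.collapse Fs c) ∈ J)
    (h : satClause J (rangeRestrictClause domP C)) : satClause (collapseInterp Fs c J) C :=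
  satClause_collapseInterp_of_forall hC fun g hg hb =>
    h _ (fun v => Term.isGround_collapse (hg v)) fun a ha => by
      rcases mem_rangeRestrictClause_body ha with ha | ⟨v, rfl⟩
      · exact hb a ha
      · simpa using hdom _ (hg v)

theorem domAtom_mem_of_satClause_step4
    (h : satClause J ⟨[domAtom domP (.var 0)], [⟨eqP, rangeVars 2⟩]⟩)
    (hR : ∀ s : Term F, s.IsGround → eqAtom eqP s s ∈ J) {t : Term F} (ht : t.IsGround) :
    domAtom domP t ∈ J := by
  obtain ⟨a, ha, hin⟩ := h (fun _ => t) (fun _ => ht) (by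
    simpa [rangeVars, Atom.subst, eqAtom, show List.range 2 = [0, 1] from rfl] using hR t ht)
  rw [List.mem_singleton.1 ha] at hin
  simpa using hin

variable [DecidableEq P] [DecidableEq F] {σ : Sig P F}

/-- The collapse only produces `c` and function symbols of `σ`, and the clauses
`dom(f(x₁,…,xₙ)) ← dom(x₁) ∧ … ∧ dom(xₙ)` of `crr` enumerate these terms. -/
theorem domAtom_collapse_mem_of_crr {M₀ : Set (Clause P F)}
    (h : ∀ C ∈ crr σ domP c M₀, satClause J C) {t : Term F} (ht : t.IsGround) :
    domAtom domP (t.collapse σ.funcs c) ∈ J := by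
  have hc : (cTerm c : Term F).IsGround := by simp [cTerm]
  induction t using Term.ind with
  | var v => simp at ht
  | app f ts ih =>
    by_cases hf : (f, ts.length) ∈ σ.funcs
    · rw [Term.collapse_app_of_mem hf]
      have hts := Term.isGround_app.1 ht
      let g : ℕ → Term F := fun i => (ts.getD i (cTerm c)).collapse σ.funcs c
      have hg : GroundSubst g := fun i => Term.isGround_collapse (groundSubst_getD hts hc i)
      have hargs : ∀ i < ts.length, domAtom domP (g i) ∈ J := fun i hi => by
        simp only [g, List.getD_eq_getElem _ _ hi]
        exact ih _ (List.getElem_mem hi) (hts _ (List.getElem_mem hi))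
      obtain ⟨a, ha, hin⟩ := h _ (.inr ⟨_, hf, rfl⟩) g hg (by simpa using hargs)
      rw [List.mem_singleton.1 ha, domAtom_subst, Term.subst_app, rangeVars_subst_getD] at hin
      exact hin
    · rw [Term.collapse_app_of_not_mem hf]
      obtain ⟨a, ha, hin⟩ := h _ (.inl ⟨_, .inr rfl, rfl⟩) (fun _ => cTerm c) (fun _ => hc) (by
        simp [rangeRestrictClause, domcClause, Clause.headVars, Clause.bodyVars, domAtom,
          Atom.vars, cTerm])
      rw [List.mem_singleton.1 ha] at hin
      simpa [cTerm] using hin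

theorem domAtom_collapse_mem_of_applyBase {bar : P → P} {M : Set (Clause P F)} (b : BaseTr)
    (heq : (eqP, 2) ∈ σ.preds) (hR : ∀ s : Term F, s.IsGround → eqAtom eqP s s ∈ J)
    (h : ∀ C ∈ applyBase σ domP c eqP bar b M, satClause J C) {t : Term F} (ht : t.IsGround) :
    domAtom domP (t.collapse σ.funcs c) ∈ J := by
  have hstep4 : ∀ {M₀ : Set (Clause P F)},
      (⟨[domAtom domP (.var 0)], [⟨eqP, rangeVars 2⟩]⟩ : Clause P F) ∈ rr σ domP c M₀ :=
    .inl (.inr ⟨_, heq, 0, two_pos, rfl⟩)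
  cases b
  · exact domAtom_mem_of_satClause_step4 (h _ hstep4) hR (Term.isGround_collapse ht)
  · exact domAtom_mem_of_satClause_step4 (h _ hstep4) hR (Term.isGround_collapse ht)
  · exact domAtom_collapse_mem_of_crr h ht
  · exact domAtom_collapse_mem_of_crr h ht

theorem ESatisfiable.of_applyTr {neqP subP : P} {bar : P → P} {b : BaseTr} {τ : BlockTr}
    {M : Set (Clause P F)} (hwf : ∀ fn ∈ funcsOf M, fn ∈ σ.funcs) (heq : (eqP, 2) ∈ σ.preds)
    (h : ESatisfiable eqP
      (applyTr σ domP c eqP neqP subP bar b τ M ∪ {reflDomClause domP eqP})) :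
    ESatisfiable eqP M := by
  obtain ⟨J, -, hJ⟩ := h
  have hbaseN : applyBase σ domP c eqP bar b M ⊆
      applyTr σ domP c eqP neqP subP bar b τ M ∪ {reflDomClause domP eqP} :=
    (subset_applyBlock τ subP neqP _).trans Set.subset_union_left
  have hbase : ∀ C ∈ applyBase σ domP c eqP bar b M, satClause J C :=
    fun C hC => hJ C (.inl (hbaseN hC))
  have hJcong : IsCongruence J eqP (predsOf M) (funcsOf M) :=
    (satClause_EAX_iff.1 fun C hC => hJ C (.inr hC)).mono
      ((predsOf_subset_predsOf_applyBase b).trans (predsOf_mono hbaseN))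
      ((funcsOf_subset_funcsOf_applyBase b).trans (funcsOf_mono hbaseN))
  have hcong : IsCongruence (collapseInterp σ.funcs c J) eqP (predsOf M) (funcsOf M) :=
    hJcong.collapseInterp fun _ hfn _ => hfn
  refine ⟨collapseInterp σ.funcs c J, fun _ h => h.1, ?_⟩
  rintro C (hC | hC)
  · refine satClause_of_satClause_shiftStep (bar := bar) b hcong.refl (fun D hD => ?_) C hC
    exact satClause_collapseInterp_of_rangeRestrict
      (fun fn hfn => hwf fn (mem_funcsOf_of_mem_shiftStep hD hfn))
      (fun t ht => domAtom_collapse_mem_of_applyBase b heq hJcong.refl hbase ht)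
      (hbase _ (rangeRestrictClause_mem_applyBase hD))
  · exact satClause_EAX_iff.2 hcong C hC

end Completeness

section Soundness

variable {eqP : P} {M : Set (Clause P F)}

theorem ESatisfiable.exists_congruence_model (c : F) (h : ESatisfiable eqP M) :
    ∃ K : Set (Atom P F), (∀ A ∈ K, A.IsGround) ∧
      (∀ A ∈ K, (A.pred, A.args.length) ∈ insert (eqP, 2) (predsOf M)) ∧
      IsCongruence K eqP Set.univ Set.univ ∧ ∀ C ∈ M, satClause K C := by
  obtain ⟨I, -, hI⟩ := h
  have hIcong := (satClause_EAX_iff.1 fun C hC => hI C (.inr hC)).insert_eq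
  refine ⟨collapseInterp (funcsOf M) c (restrictPreds I (insert (eqP, 2) (predsOf M))),
    fun _ h => h.1, fun A hA => by simpa [Atom.collapse] using hA.2.2,
    (hIcong.restrictPreds (Set.mem_insert _ _)).collapseInterp fun _ _ h => h,
    fun C hC => satClause_collapseInterp (fun fn hfn => ⟨C, hC, hfn⟩) ?_⟩
  exact satClause_restrictPreds (fun pn hpn => Set.mem_insert_of_mem _ ⟨C, hC, hpn⟩)
    (hI C (.inl hC))

variable [DecidableEq P] [DecidableEq F] {σ : Sig P F} {domP neqP subP : P} {c : F}
  {bar : P → P}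

theorem ESatisfiable.applyTr {b : BaseTr} {τ : BlockTr}
    (hfresh : AuxFresh (insert (eqP, 2) (predsOf M)) domP neqP subP bar)
    (h : ESatisfiable eqP M) :
    ESatisfiable eqP
      (applyTr σ domP c eqP neqP subP bar b τ M ∪ {reflDomClause domP eqP}) := by
  obtain ⟨K, hKg, hKP, hK, hKM⟩ := h.exists_congruence_model c
  set K' := auxExtension domP eqP neqP subP bar K
  have hmem : ∀ {A : Atom P F}, (A.pred, A.args.length) ∈ insert (eqP, 2) (predsOf M) →
      (A ∈ K' ↔ A ∈ K) := mem_auxExtension_iff hKg hfresh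
  have hcong : IsCongruence K' eqP Set.univ Set.univ :=
    hK.auxExtension hKg hfresh (Set.mem_insert _ _)
  have hM : ∀ C ∈ M, satClause K' C := fun C hC => (hKM C hC).of_agree fun a ha g _ => by
    have hpn : (a.pred, a.args.length) ∈ predsOf M := ⟨C, hC, Clause.mem_preds ha⟩
    exact (hmem (A := a.subst g) (by simpa using Or.inr hpn)).symm
  have hbar : BarComplement K' bar (insert (eqP, 2) (predsOf M)) := by
    intro pn hpn ts hlen hts
    rw [barAtom_mem_auxExtension_iff hKP hfresh, hmem (by simpa [hlen] using hpn)]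
    exact and_iff_right hts
  have hsplit : ∀ s t : Term F, s.IsGround → t.IsGround →
      (eqAtom eqP s t ∈ K' ↔ eqAtom neqP s t ∉ K') := by
    intro s t hs ht
    rw [hmem (Set.mem_insert _ _), neqAtom_mem_auxExtension_iff hKP hfresh]
    simp [hs, ht]
  refine ⟨K', fun _ h => h.1, ?_⟩
  rintro C ((hC | rfl) | hC)
  · exact satClause_applyBlock τ (fun _ _ => subAtom_mem_auxExtension) hsplit
      (satClause_applyBase b (fun _ => domAtom_mem_auxExtension)
        (satClause_shiftStep b hcong hM hbar)) C hC
  · exact satClause_of_mem_heads (List.mem_singleton_self _) fun g hg => by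
      simpa using hcong.refl _ (hg 0)
  · exact satClause_EAX_iff.2 (hcong.mono (Set.subset_univ _) (Set.subset_univ _)) C hC

end Soundness

theorem combined_E_completeness_soundness_general {P F : Type} [DecidableEq P] [DecidableEq F]
    (σ : Sig P F) (domP : P) (c : F) (eqP neqP subP : P) (bar : P → P)
    (b : BaseTr) (τ : BlockTr) (M : Set (Clause P F))
    (hwf : WFSet σ M)
    (hdomFresh : ∀ n, (domP, n) ∉ σ.preds)
    (heq : (eqP, 2) ∈ σ.preds)
    (hneqFresh : ∀ n, (neqP, n) ∉ σ.preds)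
    (hsubFresh : ∀ n, (subP, n) ∉ σ.preds) (hsubNeq : subP ≠ neqP)
    (hbarInj : Function.Injective bar)
    (hbarFresh : ∀ p n, (bar p, n) ∉ σ.preds)
    (hbarNew : ∀ p, bar p ≠ p ∧ bar p ≠ domP ∧ bar p ≠ neqP ∧ bar p ≠ subP) :
    (ESatisfiable eqP
        (applyTr σ domP c eqP neqP subP bar b τ M ∪ {reflDomClause domP eqP}) →
      ESatisfiable eqP M) ∧
    (ESatisfiable eqP M →
      ESatisfiable eqP
        (applyTr σ domP c eqP neqP subP bar b τ M ∪ {reflDomClause domP eqP})) := by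
  have hpreds : insert (eqP, 2) (predsOf M) ⊆ σ.preds :=
    Set.insert_subset heq fun pn ⟨C, hC, hpn⟩ => (hwf C hC).1 pn hpn
  have hfresh : AuxFresh σ.preds domP neqP subP bar :=
    ⟨hdomFresh, hneqFresh, hsubFresh, hbarFresh, hsubNeq, hbarInj, fun p => (hbarNew p).2⟩
  exact ⟨ESatisfiable.of_applyTr (fun fn ⟨C, hC, hfn⟩ => (hwf C hC).2 fn hfn) heq,
    ESatisfiable.applyTr (hfresh.mono hpreds)⟩

/-- **Completeness (and soundness) of the combined transformations w.r.t.
E-interpretations** (Theorem 1 (iii)): for every clause set `M` and every transformation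
`tr` in
`{rr, sh∘rr, crr, sh∘crr} ∪ {π∘τ : π ∈ {rr, sh∘rr, crr, sh∘crr}, τ ∈ {blsd, blsp, blud, blup}}`
(composition read left-to-right), `tr(M) ∪ {x ≈ x ← dom(x)}` is E-satisfiable if and only
if `M` is E-satisfiable. -/
theorem combined_E_completeness_soundness {P F : Type} [DecidableEq P] [DecidableEq F]
    (σ : Sig P F) (domP : P) (c : F) (eqP neqP subP : P) (bar : P → P)
    (b : BaseTr) (τ : BlockTr) (M : Set (Clause P F))
    (hfin : M.Finite) (hwf : WFSet σ M)
    (hdomFresh : ∀ n, (domP, n) ∉ σ.preds)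
    (heq : (eqP, 2) ∈ σ.preds)
    (hneqFresh : ∀ n, (neqP, n) ∉ σ.preds) (hneqDom : neqP ≠ domP)
    (hsubFresh : ∀ n, (subP, n) ∉ σ.preds) (hsubDom : subP ≠ domP) (hsubNeq : subP ≠ neqP)
    (hbarInj : Function.Injective bar)
    (hbarFresh : ∀ p n, (bar p, n) ∉ σ.preds)
    (hbarNew : ∀ p, bar p ≠ p ∧ bar p ≠ domP ∧ bar p ≠ neqP ∧ bar p ≠ subP) :
    (ESatisfiable eqP
        (applyTr σ domP c eqP neqP subP bar b τ M ∪ {reflDomClause domP eqP}) →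
      ESatisfiable eqP M) ∧
    (ESatisfiable eqP M →
      ESatisfiable eqP
        (applyTr σ domP c eqP neqP subP bar b τ M ∪ {reflDomClause domP eqP})) :=
  combined_E_completeness_soundness_general σ domP c eqP neqP subP bar b τ M hwf hdomFresh heq
    hneqFresh hsubFresh hsubNeq hbarInj hbarFresh hbarNew

end BUMG
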